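/- arXiv:1807.01962 — 9 statements merged into one kernel-verified Lean document; each statement's English description precedes it below -/
import Mathlib

section
/- Consider the eight {0,1}-vectors in Fin 8 → Fin 4 → ℕ given by: v1 = (1,0,0,0), v2 = (0,1,0,0), v3 = (0,0,1,0), v4 = (0,0,0,1), v5 = v6 = (1,1,0,0), v7 = v8 = (0,0,1,1); each vector has one or two entries equal to 1. Then: (a) the pair partition M0 with blocks {1,3}, {2,4}, {5,6}, {7,8} has minimum cost (namely 8) among all pair partitions of Fin 8; (b) every second-phase partition of the blocks of M0 has induced cost at least 6; and (c) the minimum cost over all quad partitions is OPT = 4 (attained by the quads {1,2,5,6} and {3,4,7,8}). Hence the two-phase matching algorithm can output a solution of cost 6 = (3/2)·OPT on this instance of PQ(#1∈{1,2}). -/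
open Finset

set_option maxRecDepth 8000

/-- Cost of a block `B`: sum of componentwise maxima of the vectors indexed by `B`. -/
def blockCost {N n : ℕ} (v : Fin N → Fin n → ℕ) (B : Finset (Fin N)) : ℕ :=
  ∑ j : Fin n, B.sup fun i => v i j

/-- Cost of a partition of `Fin N`: sum of the costs of its blocks. -/
def partCost {N n : ℕ} (v : Fin N → Fin n → ℕ)
    (P : Finpartition (univ : Finset (Fin N))) : ℕ :=
  ∑ b ∈ P.parts, blockCost v b

/-- A pair partition: every block has size 2. -/
def IsPairPartition {N : ℕ} (P : Finpartition (univ : Finset (Fin N))) : Prop :=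
  ∀ b ∈ P.parts, b.card = 2

/-- A quad partition: every block has size 4. -/
def IsQuadPartition {N : ℕ} (P : Finpartition (univ : Finset (Fin N))) : Prop :=
  ∀ b ∈ P.parts, b.card = 4

/-- A second-phase partition: a partition of the blocks of `M` into pairs of blocks. -/
def IsSecondPhase {N : ℕ} (M : Finpartition (univ : Finset (Fin N)))
    (S : Finpartition M.parts) : Prop :=
  ∀ q ∈ S.parts, q.card = 2

/-- Induced cost of a second-phase partition: cost of the quad partition whose blocks
are the unions of the paired blocks. -/
def inducedCost {N n : ℕ} (v : Fin N → Fin n → ℕ)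
    (M : Finpartition (univ : Finset (Fin N))) (S : Finpartition M.parts) : ℕ :=
  ∑ q ∈ S.parts, blockCost v (q.sup id)

/-- The eight vectors of the bad instance of PQ(#1 ∈ {1,2}). -/
def badVec4 : Fin 8 → Fin 4 → ℕ :=
  ![![1, 0, 0, 0], ![0, 1, 0, 0], ![0, 0, 1, 0], ![0, 0, 0, 1],
    ![1, 1, 0, 0], ![1, 1, 0, 0], ![0, 0, 1, 1], ![0, 0, 1, 1]]

lemma partCost_swap {N n : ℕ} (v : Fin N → Fin n → ℕ)
    (P : Finpartition (univ : Finset (Fin N))) :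
    partCost v P = ∑ j : Fin n, ∑ b ∈ P.parts, b.sup fun i => v i j := by
  rw [partCost]
  simp only [blockCost]
  exact Finset.sum_comm

lemma coord_lb_pair (P : Finpartition (univ : Finset (Fin 8)))
    (hP : IsPairPartition P) (j : Fin 4) (i1 i2 i3 : Fin 8)
    (h12 : i1 ≠ i2) (h13 : i1 ≠ i3) (h23 : i2 ≠ i3)
    (hv1 : badVec4 i1 j = 1) (hv2 : badVec4 i2 j = 1) (hv3 : badVec4 i3 j = 1) :
    2 ≤ ∑ b ∈ P.parts, b.sup fun i => badVec4 i j := by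
  obtain ⟨b1, hb1, hi1⟩ := P.exists_mem (mem_univ i1)
  obtain ⟨b2, hb2, hi2⟩ := P.exists_mem (mem_univ i2)
  obtain ⟨b3, hb3, hi3⟩ := P.exists_mem (mem_univ i3)
  have key : ∀ c1 c2 : Finset (Fin 8), c1 ∈ P.parts → c2 ∈ P.parts → c1 ≠ c2 →
      (1 ≤ c1.sup fun i => badVec4 i j) → (1 ≤ c2.sup fun i => badVec4 i j) →
      2 ≤ ∑ b ∈ P.parts, b.sup fun i => badVec4 i j := by
    intro c1 c2 hc1 hc2 hne hs1 hs2
    calc (2 : ℕ) ≤ ∑ b ∈ ({c1, c2} : Finset (Finset (Fin 8))), b.sup fun i => badVec4 i j := by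
          rw [Finset.sum_pair hne]; omega
      _ ≤ ∑ b ∈ P.parts, b.sup fun i => badVec4 i j := by
          apply Finset.sum_le_sum_of_subset
          intro x hx
          simp only [mem_insert, mem_singleton] at hx
          rcases hx with rfl | rfl <;> assumption
  have s1 : 1 ≤ b1.sup fun i => badVec4 i j := hv1 ▸ Finset.le_sup (f := fun i => badVec4 i j) hi1
  have s2 : 1 ≤ b2.sup fun i => badVec4 i j := hv2 ▸ Finset.le_sup (f := fun i => badVec4 i j) hi2
  have s3 : 1 ≤ b3.sup fun i => badVec4 i j := hv3 ▸ Finset.le_sup (f := fun i => badVec4 i j) hi3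
  by_cases h : b1 = b2
  · by_cases h' : b1 = b3
    · exfalso
      subst h; subst h'
      have hsub : ({i1, i2, i3} : Finset (Fin 8)) ⊆ b1 := by
        intro x hx
        simp only [mem_insert, mem_singleton] at hx
        rcases hx with rfl | rfl | rfl <;> assumption
      have hcard : ({i1, i2, i3} : Finset (Fin 8)).card = 3 := by
        rw [Finset.card_insert_of_notMem (by simp [h12, h13]),
          Finset.card_insert_of_notMem (by simp [h23]), Finset.card_singleton]
      have := Finset.card_le_card hsub
      rw [hcard, hP b1 hb1] at this
      omega
    · exact key b1 b3 hb1 hb3 h' s1 s3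
  · exact key b1 b2 hb1 hb2 h s1 s2

lemma coord_lb_any (P : Finpartition (univ : Finset (Fin 8))) (j : Fin 4)
    (i : Fin 8) (hv : badVec4 i j = 1) :
    1 ≤ ∑ b ∈ P.parts, b.sup fun i => badVec4 i j := by
  obtain ⟨b, hb, hi⟩ := P.exists_mem (mem_univ i)
  have s : 1 ≤ b.sup fun i => badVec4 i j := hv ▸ Finset.le_sup (f := fun i => badVec4 i j) hi
  calc (1 : ℕ) ≤ b.sup fun i => badVec4 i j := s
    _ ≤ ∑ b ∈ P.parts, b.sup fun i => badVec4 i j :=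
        Finset.single_le_sum (fun _ _ => Nat.zero_le _) hb

lemma key3 : ∀ b1 ∈ ({({0, 2} : Finset (Fin 8)), {1, 3}, {4, 5}, {6, 7}} : Finset (Finset (Fin 8))),
    ∀ b2 ∈ ({({0, 2} : Finset (Fin 8)), {1, 3}, {4, 5}, {6, 7}} : Finset (Finset (Fin 8))),
    b1 ≠ b2 → 3 ≤ blockCost badVec4 (b1 ⊔ b2) := by decide

/-- On the instance `badVec4`, the first-phase matching with blocks
{1,3}, {2,4}, {5,6}, {7,8} (0-indexed: {0,2}, {1,3}, {4,5}, {6,7}) is a minimum-cost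
pair partition of cost 8, every second-phase partition of its blocks has induced cost
at least 6, and the optimum quad-partition cost is 4, attained by the quads
{1,2,5,6} and {3,4,7,8} (0-indexed: {0,1,4,5} and {2,3,6,7}). -/
theorem pq_lb_instance (M0 : Finpartition (univ : Finset (Fin 8)))
    (hM0 : M0.parts = {({0, 2} : Finset (Fin 8)), {1, 3}, {4, 5}, {6, 7}}) :
    IsPairPartition M0 ∧ partCost badVec4 M0 = 8 ∧
    (∀ M' : Finpartition (univ : Finset (Fin 8)),
      IsPairPartition M' → partCost badVec4 M0 ≤ partCost badVec4 M') ∧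
    (∀ S : Finpartition M0.parts, IsSecondPhase M0 S → 6 ≤ inducedCost badVec4 M0 S) ∧
    (∃ Q : Finpartition (univ : Finset (Fin 8)), IsQuadPartition Q ∧
      Q.parts = {({0, 1, 4, 5} : Finset (Fin 8)), {2, 3, 6, 7}} ∧
      partCost badVec4 Q = 4) ∧
    (∀ Q : Finpartition (univ : Finset (Fin 8)),
      IsQuadPartition Q → 4 ≤ partCost badVec4 Q) := by
  have hcost8 : partCost badVec4 M0 = 8 := by
    rw [partCost, hM0]; decide
  refine ⟨?_, hcost8, ?_, ?_, ?_, ?_⟩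
  · -- IsPairPartition M0
    intro b hb
    rw [hM0] at hb
    revert b hb; decide
  · -- minimality among pair partitions
    intro M' hM'
    rw [hcost8, partCost_swap]
    have h0 := coord_lb_pair M' hM' 0 0 4 5 (by decide) (by decide) (by decide)
      (by decide) (by decide) (by decide)
    have h1 := coord_lb_pair M' hM' 1 1 4 5 (by decide) (by decide) (by decide)
      (by decide) (by decide) (by decide)
    have h2 := coord_lb_pair M' hM' 2 2 6 7 (by decide) (by decide) (by decide)
      (by decide) (by decide) (by decide)
    have h3 := coord_lb_pair M' hM' 3 3 6 7 (by decide) (by decide) (by decide)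
      (by decide) (by decide) (by decide)
    rw [Fin.sum_univ_four]
    omega
  · -- second phase ≥ 6
    intro S hS
    have hquad : ∀ q ∈ S.parts, 3 ≤ blockCost badVec4 (q.sup id) := by
      intro q hq
      have hqsub : q ⊆ M0.parts := S.le hq
      obtain ⟨b1, b2, hne, rfl⟩ := Finset.card_eq_two.mp (hS q hq)
      have hb1 : b1 ∈ M0.parts := hqsub (by simp)
      have hb2 : b2 ∈ M0.parts := hqsub (by simp)
      have hsup : ({b1, b2} : Finset (Finset (Fin 8))).sup id = b1 ⊔ b2 := by
        rw [Finset.sup_insert, Finset.sup_singleton]; rfl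
      rw [hsup]
      rw [hM0] at hb1 hb2
      exact key3 b1 hb1 b2 hb2 hne
    have hcard : S.parts.card = 2 := by
      have := S.sum_card_parts
      rw [Finset.sum_congr rfl hS] at this
      simp only [Finset.sum_const, smul_eq_mul] at this
      have hm : M0.parts.card = 4 := by rw [hM0]; decide
      omega
    have hle := Finset.card_nsmul_le_sum S.parts (fun q => blockCost badVec4 (q.sup id)) 3 hquad
    rw [hcard, smul_eq_mul] at hle
    exact hle
  · -- existence of optimal quad partition
    refine ⟨⟨{({0, 1, 4, 5} : Finset (Fin 8)), {2, 3, 6, 7}}, ?_, ?_, ?_⟩, ?_, rfl, ?_⟩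
    · rw [Finset.supIndep_pair (by decide : ({0, 1, 4, 5} : Finset (Fin 8)) ≠ {2, 3, 6, 7})]
      decide
    · decide
    · decide
    · intro b hb; revert b hb; decide
    · rw [partCost]; decide
  · -- quad lower bound
    intro Q _
    rw [partCost_swap, Fin.sum_univ_four]
    have h0 := coord_lb_any Q 0 0 (by decide)
    have h1 := coord_lb_any Q 1 1 (by decide)
    have h2 := coord_lb_any Q 2 2 (by decide)
    have h3 := coord_lb_any Q 3 3 (by decide)
    omega
end

section
/- Consider the eight {0,1}-vectors in Fin 8 → Fin 5 → ℕ whose supports are: v1 = v2 = {1,2}, v3 = {1,3}, v4 = {2,3}, v5 = {3,4}, v6 = {3,5}, v7 = v8 = {4,5}; each vector has exactly two entries equal to 1. Then: (a) the pair partition M0 with blocks {1,2}, {3,5}, {4,6}, {7,8} has minimum cost (namely 10) among all pair partitions of Fin 8; (b) every second-phase partition of the blocks of M0 has induced cost at least 8; and (c) the minimum cost over all quad partitions is OPT = 6 (attained by the quads {1,2,3,4} and {5,6,7,8}). Hence the two-phase matching algorithm can output a solution of cost 8 = (4/3)·OPT on this instance of PQ(#1=2). -/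
set_option maxRecDepth 10000

open Finset

/-- The eight vectors of the bad instance of PQ(#1=2); supports (1-indexed):
{1,2}, {1,2}, {1,3}, {2,3}, {3,4}, {3,5}, {4,5}, {4,5}. -/
def badVec5 : Fin 8 → Fin 5 → ℕ :=
  ![![1, 1, 0, 0, 0], ![1, 1, 0, 0, 0], ![1, 0, 1, 0, 0], ![0, 1, 1, 0, 0],
    ![0, 0, 1, 1, 0], ![0, 0, 1, 0, 1], ![0, 0, 0, 1, 1], ![0, 0, 0, 1, 1]]

/-! A pair partition costs at least 10 by LP duality: the weights `pairWeight / 2` sum to 10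
and every pair costs at least the sum of its two weights. Every quad contains three distinct
vectors, and any three of them already cover three coordinates, so a quad partition costs at
least 6. Every union of two blocks of the first-phase matching covers four coordinates, so
the second phase pays at least 8. -/

namespace Finpartition

variable {α : Type*} [DecidableEq α] {s : Finset α} (P : Finpartition s)

theorem sum_sum_parts {M : Type*} [AddCommMonoid M] (f : α → M) :
    ∑ b ∈ P.parts, ∑ i ∈ b, f i = ∑ i ∈ s, f i :=
  (sum_biUnion P.supIndep.pairwiseDisjoint).symm.trans (by rw [P.biUnion_parts])

theorem card_parts_mul_of_card_eq {k : ℕ} (h : ∀ b ∈ P.parts, #b = k) :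
    #P.parts * k = #s := by
  rw [← P.sum_card_parts, sum_congr rfl h, sum_const, smul_eq_mul]

end Finpartition

section Cost

variable {N n : ℕ} (v : Fin N → Fin n → ℕ)

theorem blockCost_mono {s t : Finset (Fin N)} (h : s ⊆ t) : blockCost v s ≤ blockCost v t :=
  sum_le_sum fun _ _ => sup_mono h

theorem le_blockCost_of_le_card {m c : ℕ}
    (h : ∀ t : Finset (Fin N), #t = m → c ≤ blockCost v t)
    {b : Finset (Fin N)} (hb : m ≤ #b) : c ≤ blockCost v b := by
  obtain ⟨t, hts, rfl⟩ := exists_subset_card_eq hb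
  exact (h t rfl).trans (blockCost_mono v hts)

theorem card_mul_le_partCost {P : Finpartition (univ : Finset (Fin N))} {c : ℕ}
    (h : ∀ b ∈ P.parts, c ≤ blockCost v b) : #P.parts * c ≤ partCost v P := by
  rw [partCost, ← smul_eq_mul]
  exact card_nsmul_le_sum _ _ _ h

theorem card_mul_le_inducedCost {M : Finpartition (univ : Finset (Fin N))}
    {S : Finpartition M.parts} {c : ℕ} (h : ∀ q ∈ S.parts, c ≤ blockCost v (q.sup id)) :
    #S.parts * c ≤ inducedCost v M S := by
  rw [inducedCost, ← smul_eq_mul]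
  exact card_nsmul_le_sum _ _ _ h

theorem sum_le_mul_partCost {P : Finpartition (univ : Finset (Fin N))} (w : Fin N → ℕ)
    {c : ℕ} (h : ∀ b ∈ P.parts, ∑ i ∈ b, w i ≤ c * blockCost v b) :
    ∑ i, w i ≤ c * partCost v P := by
  rw [← P.sum_sum_parts, partCost, mul_sum]
  exact sum_le_sum h

end Cost

def pairWeight : Fin 8 → ℕ := ![2, 2, 3, 3, 3, 3, 2, 2]

theorem pairWeight_add_le_two_mul_blockCost :
    ∀ i j : Fin 8, i ≠ j → pairWeight i + pairWeight j ≤ 2 * blockCost badVec5 {i, j} := by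
  decide

theorem three_le_blockCost_badVec5 :
    ∀ t : Finset (Fin 8), #t = 3 → 3 ≤ blockCost badVec5 t := by
  decide

theorem ten_le_partCost_badVec5 {M : Finpartition (univ : Finset (Fin 8))}
    (hM : IsPairPartition M) : 10 ≤ partCost badVec5 M := by
  have := sum_le_mul_partCost badVec5 pairWeight (c := 2) fun b hb => by
    obtain ⟨i, j, hij, rfl⟩ := card_eq_two.mp (hM b hb)
    rw [sum_pair hij]
    exact pairWeight_add_le_two_mul_blockCost i j hij
  have hw : ∑ i, pairWeight i = 20 := by decide
  omega

theorem six_le_partCost_badVec5 {Q : Finpartition (univ : Finset (Fin 8))}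
    (hQ : IsQuadPartition Q) : 6 ≤ partCost badVec5 Q := by
  have hcard : #Q.parts * 4 = 8 := Q.card_parts_mul_of_card_eq hQ
  have := card_mul_le_partCost badVec5 fun b hb =>
    le_blockCost_of_le_card badVec5 three_le_blockCost_badVec5 (by rw [hQ b hb]; norm_num)
  omega

theorem four_le_blockCost_union_badVec5 {M0 : Finpartition (univ : Finset (Fin 8))}
    (hM0 : M0.parts = {({0, 1} : Finset (Fin 8)), {2, 4}, {3, 5}, {6, 7}})
    {b b' : Finset (Fin 8)} (hb : b ∈ M0.parts) (hb' : b' ∈ M0.parts) (hbb' : b ≠ b') :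
    4 ≤ blockCost badVec5 (b ∪ b') := by
  rw [hM0] at hb hb'
  revert b b'
  decide

theorem eight_le_inducedCost_badVec5 {M0 : Finpartition (univ : Finset (Fin 8))}
    (hM0 : M0.parts = {({0, 1} : Finset (Fin 8)), {2, 4}, {3, 5}, {6, 7}})
    {S : Finpartition M0.parts} (hS : IsSecondPhase M0 S) : 8 ≤ inducedCost badVec5 M0 S := by
  have hcard : #S.parts * 2 = 4 := by
    rw [S.card_parts_mul_of_card_eq hS, hM0]
    decide
  have := card_mul_le_inducedCost badVec5 (c := 4) fun q hq => by
    obtain ⟨b, b', hbb', rfl⟩ := card_eq_two.mp (hS q hq)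
    have hsub : {b, b'} ⊆ M0.parts := S.le hq
    simp only [sup_insert, sup_singleton, id]
    exact four_le_blockCost_union_badVec5 hM0 (hsub (by simp)) (hsub (by simp)) hbb'
  omega

def optQuadPartition : Finpartition (univ : Finset (Fin 8)) where
  parts := {{0, 1, 2, 3}, {4, 5, 6, 7}}
  supIndep := by
    rw [supIndep_pair (by decide)]
    decide
  sup_parts := by decide
  bot_notMem := by decide

/-- On the instance `badVec5`, the first-phase matching with blocks
{1,2}, {3,5}, {4,6}, {7,8} (0-indexed: {0,1}, {2,4}, {3,5}, {6,7}) is a minimum-cost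
pair partition of cost 10, every second-phase partition of its blocks has induced
cost at least 8, and the optimum quad-partition cost is 6, attained by the quads
{1,2,3,4} and {5,6,7,8} (0-indexed: {0,1,2,3} and {4,5,6,7}). -/
theorem pq2_lb_instance (M0 : Finpartition (univ : Finset (Fin 8)))
    (hM0 : M0.parts = {({0, 1} : Finset (Fin 8)), {2, 4}, {3, 5}, {6, 7}}) :
    IsPairPartition M0 ∧ partCost badVec5 M0 = 10 ∧
    (∀ M' : Finpartition (univ : Finset (Fin 8)),
      IsPairPartition M' → partCost badVec5 M0 ≤ partCost badVec5 M') ∧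
    (∀ S : Finpartition M0.parts, IsSecondPhase M0 S → 8 ≤ inducedCost badVec5 M0 S) ∧
    (∃ Q : Finpartition (univ : Finset (Fin 8)), IsQuadPartition Q ∧
      Q.parts = {({0, 1, 2, 3} : Finset (Fin 8)), {4, 5, 6, 7}} ∧
      partCost badVec5 Q = 6) ∧
    (∀ Q : Finpartition (univ : Finset (Fin 8)),
      IsQuadPartition Q → 6 ≤ partCost badVec5 Q) := by
  have hM0pair : IsPairPartition M0 := by
    rw [IsPairPartition, hM0]
    decide
  have hM0cost : partCost badVec5 M0 = 10 := by
    rw [partCost, hM0]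
    decide
  refine ⟨hM0pair, hM0cost, fun M' hM' => hM0cost ▸ ten_le_partCost_badVec5 hM',
    fun S hS => eight_le_inducedCost_badVec5 hM0 hS, ⟨optQuadPartition, ?_, rfl, ?_⟩,
    fun Q hQ => six_le_partCost_badVec5 hQ⟩
  · unfold IsQuadPartition
    decide
  · rw [partCost]
    decide
end

section
/- For all natural numbers N and n and every family v : Fin N → Fin n → ℕ of nonnegative integer vectors, there exist a natural number m and a family w : Fin N → Fin m → ℕ with w i j ∈ {0,1} for all i, j, such that for every subset B ⊆ Fin N, ∑_{j<n} (max_{i∈B} v i j) = ∑_{j<m} (max_{i∈B} w i j). That is, every instance of problem PQ with arbitrary nonnegative integer vectors can be replaced by an instance with {0,1}-vectors in which every set of vectors has the same cost. -/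
open Finset

/-- Every instance of problem PQ with arbitrary nonnegative integer vectors can be
replaced by an instance with {0,1}-vectors in which every set of vectors has the
same cost (the cost of a block `B` being the sum of the componentwise maxima of the
vectors indexed by `B`). -/
theorem pq_reduction_to_01 (N n : ℕ) (v : Fin N → Fin n → ℕ) :
    ∃ (m : ℕ) (w : Fin N → Fin m → ℕ),
      (∀ i j, w i j = 0 ∨ w i j = 1) ∧
      ∀ B : Finset (Fin N),
        (∑ j : Fin n, B.sup fun i => v i j) = ∑ j : Fin m, B.sup fun i => w i j := by
  set M : Fin n → ℕ := fun j => univ.sup fun i => v i j with hM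
  have e : (Σ j : Fin n, Fin (M j)) ≃ Fin (∑ j, M j) :=
    Fintype.equivFinOfCardEq (by simp)
  refine ⟨∑ j, M j,
    fun i p => if ((e.symm p).2 : ℕ) < v i (e.symm p).1 then 1 else 0, ?_, ?_⟩
  · intro i j
    dsimp only
    split <;> simp
  · intro B
    rw [← Fintype.sum_equiv e
        (fun p => B.sup fun i => if ((p.2 : ℕ)) < v i p.1 then 1 else 0)
        (fun p => B.sup fun i =>
          if ((e.symm p).2 : ℕ) < v i (e.symm p).1 then 1 else 0)
        (fun p => by beta_reduce; rw [Equiv.symm_apply_apply])]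
    rw [← Finset.univ_sigma_univ, Finset.sum_sigma]
    refine Finset.sum_congr rfl fun j _ => ?_
    have hsup : ∀ k : Fin (M j),
        (B.sup fun i => if (k : ℕ) < v i j then 1 else 0) =
          if (k : ℕ) < B.sup fun i => v i j then 1 else 0 := by
      intro k
      rcases lt_or_ge (k : ℕ) (B.sup fun i => v i j) with h | h
      · rw [if_pos h]
        obtain ⟨i, hi, hk⟩ := Finset.lt_sup_iff.mp h
        refine le_antisymm ?_ ?_
        · exact Finset.sup_le fun i' _ => by split <;> simp
        · exact le_trans (by simp [hk]) (Finset.le_sup hi)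
      · rw [if_neg (not_lt.mpr h)]
        refine Nat.le_zero.mp (Finset.sup_le fun i hi => ?_)
        simp [not_lt.mpr (le_trans (Finset.le_sup hi) h)]
    simp_rw [hsup]
    have hle : (B.sup fun i => v i j) ≤ M j :=
      Finset.sup_mono (Finset.subset_univ B)
    rw [Fin.sum_univ_eq_sum_range (fun k => if k < B.sup fun i => v i j then 1 else 0)]
    rw [Finset.sum_boole, Nat.cast_id]
    have : Finset.filter (fun k => k < B.sup fun i => v i j) (Finset.range (M j)) =
        Finset.range (B.sup fun i => v i j) := by
      ext k
      simp only [Finset.mem_filter, Finset.mem_range]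
      omega
    rw [this, Finset.card_range]
end

section
/- Let N be even and let v : Fin N → Fin n → ℕ be any family of vectors. Call a block {i,j} of a pair partition an identical pair if v i = v j. Then there exists a pair partition P of Fin N such that P has minimum cost among all pair partitions, and simultaneously the number of identical pairs among the blocks of P equals the maximum, over all pair partitions of Fin N, of the number of identical pairs. -/
open Finset

open scoped Classical in
/-- The number of identical pairs of a pair partition: blocks all of whose elements
carry the same vector. -/
noncomputable def identicalPairs {N n : ℕ} (v : Fin N → Fin n → ℕ)
    (P : Finpartition (univ : Finset (Fin N))) : ℕ :=
  (P.parts.filter fun b => ∀ i ∈ b, ∀ j ∈ b, v i = v j).card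

/-! If `v i = v j` and `i`, `j` lie in two different non-identical pairs `{i, a}` and `{j, b}`,
replacing these by `{i, j}` and `{a, b}` creates an identical pair without increasing the cost,
since coordinatewise `x + max y z ≤ max x y + max x z`. A pair partition has at most
`∑_w ⌊#v⁻¹(w) / 2⌋` identical pairs, and while it has fewer, some value `w` has two
elements outside identical pairs, so such an exchange applies. Hence a minimum-cost pair
partition with the most identical pairs among minimum-cost ones attains this bound. -/

namespace Finset

theorem sum_add_sum_eq_sum_add_sum_of_eqOn_sdiff {ι M : Type*} [DecidableEq ι] [AddCommMonoid M]
    {s t : Finset ι} {f g : ι → M} (ht : t ⊆ s) (hfg : Set.EqOn f g ↑(s \ t)) :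
    ∑ i ∈ s, f i + ∑ i ∈ t, g i = ∑ i ∈ s, g i + ∑ i ∈ t, f i := by
  rw [← sum_sdiff ht (f := f), ← sum_sdiff ht (f := g), sum_congr rfl hfg]
  abel

theorem exists_ne_eq_pair_of_card_eq_two {α : Type*} [DecidableEq α] {s : Finset α} {a : α}
    (hs : #s = 2) (ha : a ∈ s) : ∃ b, b ≠ a ∧ s = {a, b} := by
  obtain ⟨b, hb⟩ := card_eq_one.mp (show #(s.erase a) = 1 by rw [card_erase_of_mem ha, hs])
  exact ⟨b, (mem_erase.mp (hb ▸ mem_singleton_self b)).1, by rw [← hb, insert_erase ha]⟩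

theorem map_swap_of_notMem {α : Type*} [DecidableEq α] {s : Finset α} {a b : α} (ha : a ∉ s)
    (hb : b ∉ s) : s.map (Equiv.swap a b).toEmbedding = s := by
  rw [map_eq_image, Equiv.coe_toEmbedding, image_congr fun x hx =>
    Equiv.swap_apply_of_ne_of_ne (ne_of_mem_of_not_mem hx ha) (ne_of_mem_of_not_mem hx hb),
    image_id']

end Finset

namespace Finpartition

variable {α : Type*} [Fintype α] [DecidableEq α]

def mapPerm (σ : Equiv.Perm α) (P : Finpartition (univ : Finset α)) :
    Finpartition (univ : Finset α) :=
  (P.map { σ.finsetCongr with map_rel_iff' := map_subset_map }).copy (map_univ_equiv σ)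

theorem sum_parts_mapPerm {M : Type*} [AddCommMonoid M] (σ : Equiv.Perm α)
    (P : Finpartition (univ : Finset α)) (f : Finset α → M) :
    ∑ b ∈ (P.mapPerm σ).parts, f b = ∑ b ∈ P.parts, f (b.map σ.toEmbedding) :=
  sum_map _ _ _

theorem sum_parts_mapPerm_add_eq {M : Type*} [AddCommMonoid M] (σ : Equiv.Perm α)
    (P : Finpartition (univ : Finset α)) {B₁ B₂ : Finset α} (h₁ : B₁ ∈ P.parts)
    (h₂ : B₂ ∈ P.parts) (hne : B₁ ≠ B₂)
    (hfix : ∀ B ∈ P.parts \ {B₁, B₂}, B.map σ.toEmbedding = B) (f : Finset α → M) :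
    ∑ b ∈ (P.mapPerm σ).parts, f b + (f B₁ + f B₂) =
      ∑ b ∈ P.parts, f b + (f (B₁.map σ.toEmbedding) + f (B₂.map σ.toEmbedding)) := by
  rw [sum_parts_mapPerm, ← sum_pair hne,
    ← sum_pair (f := fun b => f (b.map σ.toEmbedding)) hne]
  exact sum_add_sum_eq_sum_add_sum_of_eqOn_sdiff
    (insert_subset h₁ (singleton_subset_iff.mpr h₂)) fun B hB => congrArg f (hfix B hB)

theorem card_filter_part_eq_sum (P : Finpartition (univ : Finset α)) (p : Finset α → Prop)
    [DecidablePred p] : #{x | p (P.part x)} = ∑ b ∈ P.parts with p b, #b := by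
  rw [card_eq_sum_card_fiberwise (f := P.part) (t := P.parts.filter p)]
  · refine sum_congr rfl fun b hb => congrArg card ?_
    ext x
    have hb := mem_filter.mp hb
    simp only [mem_filter, mem_univ, true_and, P.part_eq_iff_mem hb.1]
    exact ⟨And.right, fun hx => ⟨(P.part_eq_of_mem hb.1 hx).symm ▸ hb.2, hx⟩⟩
  · intro x hx
    exact mem_filter.mpr ⟨P.part_mem.mpr (mem_univ x), (mem_filter.mp hx).2⟩

end Finpartition

section PairPartitions

variable {N n : ℕ} (v : Fin N → Fin n → ℕ)

theorem blockCost_pair (i j : Fin N) :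
    blockCost v {i, j} = ∑ c, max (v i c) (v j c) := by
  simp [blockCost]

theorem blockCost_pair_add_pair_le {i j : Fin N} (hij : v i = v j) (a b : Fin N) :
    blockCost v {i, j} + blockCost v {a, b} ≤ blockCost v {i, a} + blockCost v {j, b} := by
  simp only [blockCost_pair, ← sum_add_distrib, hij]
  exact sum_le_sum fun c _ => by omega

theorem exists_isPairPartition (hN : Even N) :
    ∃ P : Finpartition (univ : Finset (Fin N)), IsPairPartition P := by
  classical
  obtain ⟨r, rfl⟩ := hN
  refine ⟨Finpartition.ofSetoid (Setoid.ker fun i : Fin (r + r) => (i : ℕ) / 2), ?_⟩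
  intro b hb
  obtain ⟨x, -, rfl⟩ := Finpartition.part_surjOn _ hb
  rw [card_eq_two]
  refine ⟨⟨2 * (x / 2), by omega⟩, ⟨2 * (x / 2) + 1, by omega⟩,
    by simp [Fin.ext_iff], ?_⟩
  ext y
  rw [Finpartition.mem_part_ofSetoid_iff_rel]
  simp only [Setoid.ker_def, mem_insert, mem_singleton, Fin.ext_iff]
  omega

theorem IsPairPartition.mapPerm {P : Finpartition (univ : Finset (Fin N))}
    (hP : IsPairPartition P) (σ : Equiv.Perm (Fin N)) : IsPairPartition (P.mapPerm σ) := by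
  intro b' hb'
  obtain ⟨b, hb, rfl⟩ := mem_map.mp hb'
  exact (card_map _).trans (hP b hb)

theorem IsPairPartition.exists_partCost_le_identicalPairs_lt
    {P : Finpartition (univ : Finset (Fin N))} (hP : IsPairPartition P) {i j : Fin N}
    (hij : v i = v j) (hne : P.part i ≠ P.part j)
    (hi : ¬ ∀ x ∈ P.part i, ∀ y ∈ P.part i, v x = v y)
    (hj : ¬ ∀ x ∈ P.part j, ∀ y ∈ P.part j, v x = v y) :
    ∃ P' : Finpartition (univ : Finset (Fin N)), IsPairPartition P' ∧
      partCost v P' ≤ partCost v P ∧ identicalPairs v P < identicalPairs v P' := by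
  have hBi := P.part_mem.mpr (mem_univ i)
  have hBj := P.part_mem.mpr (mem_univ j)
  obtain ⟨a, hai, hBi_eq⟩ :=
    exists_ne_eq_pair_of_card_eq_two (hP _ hBi) (P.mem_part (mem_univ i))
  obtain ⟨b, hbj, hBj_eq⟩ :=
    exists_ne_eq_pair_of_card_eq_two (hP _ hBj) (P.mem_part (mem_univ j))
  have hdisj : Disjoint (P.part i) (P.part j) := P.disjoint hBi hBj hne
  rw [hBi_eq, hBj_eq] at hdisj
  simp only [disjoint_insert_left, disjoint_insert_right, disjoint_singleton_left,
    mem_insert, mem_singleton, not_or] at hdisj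
  obtain ⟨⟨hji, hja⟩, hib, hab⟩ := hdisj
  -- Conjugating by the transposition `(a j)` turns `{i, a}, {j, b}` into `{i, j}, {a, b}`.
  set σ := Equiv.swap a j
  have hσi : (P.part i).map σ.toEmbedding = {i, j} := by
    simp [hBi_eq, σ, Equiv.swap_apply_of_ne_of_ne hai.symm (Ne.symm hji)]
  have hσj : (P.part j).map σ.toEmbedding = {a, b} := by
    simp [hBj_eq, σ, Equiv.swap_apply_of_ne_of_ne (Ne.symm hab) hbj]
  have hσ_rest : ∀ B ∈ P.parts \ {P.part i, P.part j}, B.map σ.toEmbedding = B := by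
    intro B hB
    simp only [mem_sdiff, mem_insert, mem_singleton, not_or] at hB
    obtain ⟨hB, hBi', hBj'⟩ := hB
    exact map_swap_of_notMem
      (fun ha => hBi' (P.eq_of_mem_parts hB hBi ha (by simp [hBi_eq])))
      (fun hjB => hBj' (P.eq_of_mem_parts hB hBj hjB (P.mem_part (mem_univ j))))
  have hsum := P.sum_parts_mapPerm_add_eq (M := ℕ) σ hBi hBj hne hσ_rest
  refine ⟨P.mapPerm σ, hP.mapPerm σ, ?_, ?_⟩
  · have hcost := hsum (blockCost v)
    rw [hσi, hσj, hBi_eq, hBj_eq] at hcost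
    have := blockCost_pair_add_pair_le v hij a b
    rw [partCost, partCost]
    omega
  · have hcount := hsum fun B => if ∀ x ∈ B, ∀ y ∈ B, v x = v y then 1 else 0
    have hij_identical : ∀ x ∈ ({i, j} : Finset (Fin N)), ∀ y ∈ ({i, j} : Finset (Fin N)),
        v x = v y := by
      simp [hij]
    simp only [hσi, hσj, if_pos hij_identical, if_neg hi, if_neg hj] at hcount
    rw [identicalPairs, identicalPairs, card_filter, card_filter]
    omega

theorem IsPairPartition.two_mul_card_filter_parts {P : Finpartition (univ : Finset (Fin N))}
    (hP : IsPairPartition P) (p : Finset (Fin N) → Prop) [DecidablePred p] :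
    2 * #{b ∈ P.parts | p b} = #{x | p (P.part x)} := by
  rw [P.card_filter_part_eq_sum, sum_congr rfl fun b hb => hP b (mem_filter.mp hb).1,
    sum_const, smul_eq_mul, mul_comm]

theorem identicalPairs_eq_sum (P : Finpartition (univ : Finset (Fin N))) :
    identicalPairs v P = ∑ w ∈ univ.image v, #{b ∈ P.parts | ∀ x ∈ b, v x = w} := by
  rw [identicalPairs, ← card_biUnion]
  · congr 1
    ext b
    simp only [mem_filter, mem_biUnion, mem_image, mem_univ, true_and]
    constructor
    · rintro ⟨hb, hid⟩
      obtain ⟨x, hx⟩ := P.nonempty_of_mem_parts hb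
      exact ⟨v x, ⟨x, rfl⟩, hb, fun y hy => hid y hy x hx⟩
    · rintro ⟨w, -, hb, hw⟩
      exact ⟨hb, fun x hx y hy => (hw x hx).trans (hw y hy).symm⟩
  · intro w _ w' _ hww'
    rw [Function.onFun, disjoint_filter]
    intro b hb hw hw'
    obtain ⟨x, hx⟩ := P.nonempty_of_mem_parts hb
    exact hww' ((hw x hx).symm.trans (hw' x hx))

def maxIdenticalPairs : ℕ :=
  ∑ w ∈ univ.image v, #{i | v i = w} / 2

theorem IsPairPartition.identicalPairs_le {P : Finpartition (univ : Finset (Fin N))}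
    (hP : IsPairPartition P) : identicalPairs v P ≤ maxIdenticalPairs v := by
  rw [identicalPairs_eq_sum, maxIdenticalPairs]
  refine sum_le_sum fun w _ => (Nat.le_div_iff_mul_le two_pos).mpr ?_
  rw [mul_comm, hP.two_mul_card_filter_parts]
  exact card_le_card (monotone_filter_right _ fun x _ hx => hx x (P.mem_part (mem_univ x)))

theorem IsPairPartition.exists_partCost_le_identicalPairs_lt_of_lt
    {P : Finpartition (univ : Finset (Fin N))} (hP : IsPairPartition P)
    (hlt : identicalPairs v P < maxIdenticalPairs v) :
    ∃ P' : Finpartition (univ : Finset (Fin N)), IsPairPartition P' ∧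
      partCost v P' ≤ partCost v P ∧ identicalPairs v P < identicalPairs v P' := by
  rw [identicalPairs_eq_sum, maxIdenticalPairs] at hlt
  obtain ⟨w, -, hw⟩ := exists_lt_of_sum_lt hlt
  have hcard : 2 ≤ #{i | v i = w ∧ ¬ ∀ x ∈ P.part i, v x = w} := by
    have hsplit := card_filter_add_card_filter_not
      (s := {i | v i = w}) (fun i => ∀ x ∈ P.part i, v x = w)
    have hblocks := hP.two_mul_card_filter_parts (fun b => ∀ x ∈ b, v x = w)
    rw [filter_filter, filter_filter, filter_congr fun i _ =>
      and_iff_right_of_imp fun h => h i (P.mem_part (mem_univ i))] at hsplit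
    omega
  obtain ⟨i, hi, j, hj, hne⟩ := one_lt_card.mp hcard
  simp only [mem_filter, mem_univ, true_and] at hi hj
  refine hP.exists_partCost_le_identicalPairs_lt v (hi.1.trans hj.1.symm) ?_ ?_ ?_
  · intro hpart
    have hsub : {i, j} ⊆ P.part i := insert_subset (P.mem_part (mem_univ i))
      (singleton_subset_iff.mpr (hpart ▸ P.mem_part (mem_univ j)))
    have hpair : P.part i = {i, j} := (eq_of_subset_of_card_le hsub
      (by rw [hP _ (P.part_mem.mpr (mem_univ i)), card_pair hne])).symm
    exact hi.2 (by simp [hpair, hi.1, hj.1])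
  · exact fun hid => hi.2 fun x hx => (hid x hx i (P.mem_part (mem_univ i))).trans hi.1
  · exact fun hid => hj.2 fun x hx => (hid x hx j (P.mem_part (mem_univ j))).trans hj.1

end PairPartitions

/-- Among the minimum-cost pair partitions, there is one containing a maximum number
of identical pairs. -/
theorem exists_min_cost_max_identical (N n : ℕ) (hN : Even N)
    (v : Fin N → Fin n → ℕ) :
    ∃ P : Finpartition (univ : Finset (Fin N)), IsPairPartition P ∧
      (∀ P' : Finpartition (univ : Finset (Fin N)),
        IsPairPartition P' → partCost v P ≤ partCost v P') ∧
      (∀ P' : Finpartition (univ : Finset (Fin N)),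
        IsPairPartition P' → identicalPairs v P' ≤ identicalPairs v P) := by
  classical
  set pairPartitions := (univ : Finset (Finpartition (univ : Finset (Fin N)))).filter
    IsPairPartition
  obtain ⟨P₀, hP₀⟩ := exists_isPairPartition hN
  obtain ⟨P₁, hP₁, hP₁_min⟩ :=
    pairPartitions.exists_min_image (partCost v) ⟨P₀, by simpa [pairPartitions]⟩
  set minCostPairPartitions := pairPartitions.filter (partCost v · = partCost v P₁)
  obtain ⟨P, hP, hP_max⟩ := minCostPairPartitions.exists_max_image (identicalPairs v)
    ⟨P₁, mem_filter.mpr ⟨hP₁, rfl⟩⟩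
  simp only [minCostPairPartitions, pairPartitions, mem_filter, mem_univ, true_and]
    at hP hP_max hP₁_min
  refine ⟨P, hP.1, fun P' hP' => hP.2 ▸ hP₁_min P' hP',
    fun P' hP' => (hP'.identicalPairs_le v).trans ?_⟩
  by_contra! hlt
  obtain ⟨Q, hQ, hQ_cost, hQ_lt⟩ := hP.1.exists_partCost_le_identicalPairs_lt_of_lt v hlt
  have := hP_max Q ⟨hQ, le_antisymm (hQ_cost.trans hP.2.le) (hP₁_min Q hQ)⟩
  omega
end

section
/- Let H be a finite simple graph that is bipartite and has maximum degree at most 2, equipped with edge weights w taking values in ℕ, and suppose every edge of H connects two vertices of the same degree. Let S1 be the total weight of the edges both of whose endpoints have degree 1, and let S2 be the total weight of the edges both of whose endpoints have degree 2. Then there exists a matching M_H in H with 2·(total weight of M_H) ≥ 2·S1 + S2, i.e., weight(M_H) ≥ S1 + S2/2. -/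
/-!
Two edges between degree-1 vertices never share a vertex, so they form a matching `E₁`, and it
meets no edge between degree-2 vertices. The degree-2 vertices span a 2-regular bipartite graph,
so Hall's theorem matches one colour class injectively into the other, and by symmetry the two
classes have the same size: this matching `M` covers every degree-2 vertex. As each such vertex
has only two incident edges, the remaining degree-2 edges form a second matching. One of the two
carries at least half the weight `S₂` of the degree-2 edges; together with `E₁` it is the
required matching.
-/

open Finset

def IsEdgeMatching {V : Type*} (M : Finset (Sym2 V)) : Prop :=
  ∀ e ∈ M, ∀ f ∈ M, e ≠ f → ∀ x : V, ¬(x ∈ e ∧ x ∈ f)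

def NoCommonVertex {V : Type*} (M N : Finset (Sym2 V)) : Prop :=
  ∀ e ∈ M, ∀ f ∈ N, ∀ x : V, ¬(x ∈ e ∧ x ∈ f)

theorem NoCommonVertex.disjoint {V : Type*} {M N : Finset (Sym2 V)} (h : NoCommonVertex M N) :
    Disjoint M N :=
  disjoint_left.mpr fun e he hf => h e he e hf _ ⟨Sym2.out_fst_mem e, Sym2.out_fst_mem e⟩

section IsEdgeMatching

variable {V : Type*} [DecidableEq V] {M N : Finset (Sym2 V)}

theorem IsEdgeMatching.union (hM : IsEdgeMatching M) (hN : IsEdgeMatching N)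
    (hMN : NoCommonVertex M N) : IsEdgeMatching (M ∪ N) := by
  intro e he f hf hef x hx
  rcases mem_union.mp he with he | he <;> rcases mem_union.mp hf with hf | hf
  · exact hM e he f hf hef x hx
  · exact hMN e he f hf x hx
  · exact hMN f hf e he x hx.symm
  · exact hN e he f hf hef x hx

theorem isEdgeMatching_image_mk {A : Finset V} {f : V → V} (hf : Set.InjOn f A)
    (hfA : ∀ a ∈ A, f a ∉ A) : IsEdgeMatching (A.image fun a => s(a, f a)) := by
  simp only [IsEdgeMatching, mem_image]
  rintro _ ⟨a, ha, rfl⟩ _ ⟨b, hb, rfl⟩ hne x ⟨hxa, hxb⟩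
  have hab : a ≠ b := fun h => hne (h ▸ rfl)
  rw [Sym2.mem_iff] at hxa hxb
  rcases hxa with rfl | rfl <;> rcases hxb with rfl | h
  · exact hab rfl
  · exact hfA b hb (h ▸ ha)
  · exact hfA a ha hb
  · exact hab (hf ha hb h)

end IsEdgeMatching

theorem Finset.eq_or_eq_of_mem_of_card_le_two {α : Type*} [DecidableEq α] {s : Finset α}
    (hs : #s ≤ 2) {a b c : α} (ha : a ∈ s) (hb : b ∈ s) (hc : c ∈ s) (hab : a ≠ b) :
    c = a ∨ c = b := by
  by_contra! h
  have : #{c, a, b} ≤ #s := card_le_card (by simp [insert_subset_iff, *])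
  rw [card_insert_of_notMem (by simp [h.1, h.2]), card_pair hab] at this
  omega

theorem Finset.le_two_mul_sum_or_sdiff {α : Type*} [DecidableEq α] {M E : Finset α}
    (hME : M ⊆ E) (w : α → ℕ) :
    ∑ e ∈ E, w e ≤ 2 * ∑ e ∈ M, w e ∨ ∑ e ∈ E, w e ≤ 2 * ∑ e ∈ E \ M, w e := by
  have := sum_sdiff hME (f := w)
  omega

namespace SimpleGraph

variable {V : Type*} [Fintype V] {G : SimpleGraph V} [DecidableRel G.Adj]

section DecidableEq

variable [DecidableEq V]

theorem isEdgeMatching_filter_degree_eq_one :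
    IsEdgeMatching (G.edgeFinset.filter fun e => ∀ x ∈ e, G.degree x = 1) := by
  intro e he f hf hef x ⟨hxe, hxf⟩
  simp only [mem_filter, mem_edgeFinset] at he hf
  have : 1 < G.degree x := by
    rw [← card_incidenceFinset_eq_degree, one_lt_card]
    exact ⟨e, (mem_incidenceFinset _ _ _).mpr ⟨he.1, hxe⟩,
      f, (mem_incidenceFinset _ _ _).mpr ⟨hf.1, hxf⟩, hef⟩
  have := he.2 x hxe
  omega

theorem isEdgeMatching_sdiff {E M : Finset (Sym2 V)} (hE : E ⊆ G.edgeFinset)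
    (hM : M ⊆ G.edgeFinset) (hcover : ∀ e ∈ E, ∀ x ∈ e, G.degree x ≤ 2 ∧ ∃ m ∈ M, x ∈ m) :
    IsEdgeMatching (E \ M) := by
  intro e he f hf hef x ⟨hxe, hxf⟩
  rw [mem_sdiff] at he hf
  obtain ⟨hx2, m, hm, hxm⟩ := hcover e he.1 x hxe
  have hinc : ∀ g ∈ G.edgeFinset, x ∈ g → g ∈ G.incidenceFinset x := fun g hg hxg => by
    simpa [incidenceSet, hxg] using hg
  rcases eq_or_eq_of_mem_of_card_le_two (G.card_incidenceFinset_eq_degree x ▸ hx2)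
    (hinc e (hE he.1) hxe) (hinc f (hE hf.1) hxf) (hinc m (hM hm) hxm) hef with rfl | rfl
  · exact he.2 hm
  · exact hf.2 hm

theorem card_le_card_biUnion_neighborFinset {k : ℕ} (hk : 0 < k) {s : Finset V}
    (hs : ∀ v ∈ s, G.degree v = k) (hN : ∀ v ∈ s, ∀ w, G.Adj v w → G.degree w ≤ k) :
    #s ≤ #(s.biUnion fun v => G.neighborFinset v) := by
  set t := s.biUnion fun v => G.neighborFinset v
  refine Nat.le_of_mul_le_mul_right (card_mul_le_card_mul G.Adj (m := k) (n := k) ?_ ?_) hk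
  · intro v hv
    rw [← hs v hv, ← card_neighborFinset_eq_degree]
    refine card_le_card fun w hw => ?_
    exact mem_filter.mpr ⟨mem_biUnion.mpr ⟨v, hv, hw⟩, (mem_neighborFinset _ _ _).mp hw⟩
  · intro w hw
    obtain ⟨v, hv, hvw⟩ := mem_biUnion.mp hw
    rw [mem_neighborFinset] at hvw
    refine le_trans (card_le_card fun u hu => ?_) ((card_neighborFinset_eq_degree G w).trans_le
      (hN v hv w hvw))
    exact (mem_neighborFinset _ _ _).mpr (mem_filter.mp hu).2.symm

theorem exists_injOn_adj {k : ℕ} (hk : 0 < k) {S : Finset V}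
    (hS : ∀ v ∈ S, G.degree v = k) (hN : ∀ v ∈ S, ∀ w, G.Adj v w → G.degree w ≤ k) :
    ∃ f : V → V, Set.InjOn f S ∧ ∀ v ∈ S, G.Adj v (f v) := by
  have hall : ∀ s : Finset S, #s ≤ #(s.biUnion fun v => G.neighborFinset v) := fun s => by
    have hsS : ∀ v ∈ s.image Subtype.val, v ∈ S := by simp +contextual
    simpa [card_image_of_injective _ Subtype.val_injective, image_biUnion] using
      card_le_card_biUnion_neighborFinset hk (fun v hv => hS v (hsS v hv))
        (fun v hv => hN v (hsS v hv))
  obtain ⟨f, hf, hfadj⟩ := (all_card_le_biUnion_card_iff_exists_injective _).mp hall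
  refine ⟨fun v => if hv : v ∈ S then f ⟨v, hv⟩ else v, fun v hv w hw hvw => ?_, fun v hv => ?_⟩
  · exact congrArg Subtype.val
      (hf (a₁ := ⟨v, hv⟩) (a₂ := ⟨w, hw⟩) (by simpa [mem_coe.mp hv, mem_coe.mp hw] using hvw))
  · simpa [hv] using hfadj ⟨v, hv⟩

end DecidableEq

def degTwoClass (c : G.Coloring (Fin 2)) (i : Fin 2) : Finset V :=
  univ.filter fun v => G.degree v = 2 ∧ c v = i

theorem mem_degTwoClass_of_adj {c : G.Coloring (Fin 2)}
    (hdeg2 : ∀ v w, G.Adj v w → G.degree v = 2 → G.degree w = 2) {i j : Fin 2} (hij : i ≠ j)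
    {v w : V} (hv : v ∈ degTwoClass c i) (hvw : G.Adj v w) : w ∈ degTwoClass c j := by
  simp only [degTwoClass, mem_filter, mem_univ, true_and] at hv ⊢
  have := c.valid hvw
  exact ⟨hdeg2 v w hvw hv.1, by omega⟩

variable [DecidableEq V]

theorem exists_injOn_degTwoClass (c : G.Coloring (Fin 2))
    (hdeg2 : ∀ v w, G.Adj v w → G.degree v = 2 → G.degree w = 2) {i j : Fin 2} (hij : i ≠ j) :
    ∃ f : V → V, Set.InjOn f (degTwoClass c i) ∧
      ∀ v ∈ degTwoClass c i, G.Adj v (f v) ∧ f v ∈ degTwoClass c j := by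
  have hdeg : ∀ v ∈ degTwoClass c i, G.degree v = 2 := fun v hv => (mem_filter.mp hv).2.1
  obtain ⟨f, hf, hfadj⟩ := exists_injOn_adj two_pos hdeg
    fun v hv w hvw => (hdeg2 v w hvw (hdeg v hv)).le
  exact ⟨f, hf, fun v hv => ⟨hfadj v hv, mem_degTwoClass_of_adj hdeg2 hij hv (hfadj v hv)⟩⟩

theorem exists_isEdgeMatching_and_isEdgeMatching_sdiff (c : G.Coloring (Fin 2))
    (hdeg2 : ∀ v w, G.Adj v w → G.degree v = 2 → G.degree w = 2) :
    ∃ M ⊆ G.edgeFinset.filter (fun e => ∀ x ∈ e, G.degree x = 2), IsEdgeMatching M ∧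
      IsEdgeMatching (G.edgeFinset.filter (fun e => ∀ x ∈ e, G.degree x = 2) \ M) := by
  obtain ⟨f, hf, hfadj⟩ := exists_injOn_degTwoClass c hdeg2 zero_ne_one
  obtain ⟨g, hg, hgadj⟩ := exists_injOn_degTwoClass c hdeg2 one_ne_zero
  -- `g` shows that the two classes have the same size, so the injection `f` is onto
  have himg : (degTwoClass c 0).image f = degTwoClass c 1 := by
    refine eq_of_subset_of_card_le (image_subset_iff.mpr fun v hv => (hfadj v hv).2) ?_
    rw [card_image_of_injOn hf]
    exact card_le_card_of_injOn g (fun v hv => (hgadj v hv).2) hg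
  set M := (degTwoClass c 0).image fun a => s(a, f a)
  have hME2 : M ⊆ G.edgeFinset.filter (fun e => ∀ x ∈ e, G.degree x = 2) := by
    simp only [M, image_subset_iff, mem_filter, mem_edgeFinset, Sym2.mem_iff, forall_eq_or_imp,
      forall_eq]
    exact fun v hv => ⟨(hfadj v hv).1, (mem_filter.mp hv).2.1, (mem_filter.mp (hfadj v hv).2).2.1⟩
  have hcover : ∀ x, G.degree x = 2 → ∃ m ∈ M, x ∈ m := fun x hx => by
    by_cases hcx : c x = 0
    · exact ⟨s(x, f x), mem_image_of_mem _ (by simp [degTwoClass, hx, hcx]), Sym2.mem_mk_left _ _⟩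
    · have hx1 : x ∈ degTwoClass c 1 := by simp [degTwoClass, hx]; omega
      obtain ⟨a, ha, rfl⟩ := mem_image.mp (himg ▸ hx1)
      exact ⟨s(a, f a), mem_image_of_mem _ ha, Sym2.mem_mk_right _ _⟩
  refine ⟨M, hME2, isEdgeMatching_image_mk hf fun v hv hfv => ?_, isEdgeMatching_sdiff
    (filter_subset _ _) (hME2.trans (filter_subset _ _)) fun e he x hx => ?_⟩
  · have h0 := (mem_filter.mp hfv).2.2
    have h1 := (mem_filter.mp (hfadj v hv).2).2.2
    exact zero_ne_one (h0.symm.trans h1)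
  · have hx2 := (mem_filter.mp he).2 x hx
    exact ⟨hx2.le, hcover x hx2⟩

end SimpleGraph

theorem matching_weight_bound_general {V : Type*} [Fintype V] [DecidableEq V]
    (G : SimpleGraph V) [DecidableRel G.Adj] (w : Sym2 V → ℕ)
    (hbip : G.Colorable 2)
    (hsame : ∀ e ∈ G.edgeSet, ∀ x ∈ e, ∀ y ∈ e, G.degree x = G.degree y) :
    ∃ M : Finset (Sym2 V), M ⊆ G.edgeFinset ∧
      (∀ e ∈ M, ∀ f ∈ M, e ≠ f → ∀ x : V, ¬(x ∈ e ∧ x ∈ f)) ∧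
      2 * ∑ e ∈ M, w e ≥
        2 * (∑ e ∈ G.edgeFinset.filter (fun e => ∀ x ∈ e, G.degree x = 1), w e) +
          ∑ e ∈ G.edgeFinset.filter (fun e => ∀ x ∈ e, G.degree x = 2), w e := by
  obtain ⟨c⟩ := hbip
  set E₁ := G.edgeFinset.filter fun e => ∀ x ∈ e, G.degree x = 1
  set E₂ := G.edgeFinset.filter fun e => ∀ x ∈ e, G.degree x = 2
  obtain ⟨M, hME, hM, hM'⟩ := SimpleGraph.exists_isEdgeMatching_and_isEdgeMatching_sdiff c
    fun v w hvw hv => hsame s(v, w) hvw w (Sym2.mem_mk_right v w) v (Sym2.mem_mk_left v w) ▸ hv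
  obtain ⟨K, hKE, hK, hKw⟩ : ∃ K ⊆ E₂, IsEdgeMatching K ∧ ∑ e ∈ E₂, w e ≤ 2 * ∑ e ∈ K, w e :=
    (le_two_mul_sum_or_sdiff hME w).elim (fun h => ⟨M, hME, hM, h⟩)
      fun h => ⟨E₂ \ M, sdiff_subset, hM', h⟩
  have hE₁K : NoCommonVertex E₁ K := fun e he f hf x ⟨hxe, hxf⟩ => by
    have h₁ := (mem_filter.mp he).2 x hxe
    have h₂ := (mem_filter.mp (hKE hf)).2 x hxf
    omega
  refine ⟨E₁ ∪ K, union_subset (filter_subset _ _) (hKE.trans (filter_subset _ _)),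
    SimpleGraph.isEdgeMatching_filter_degree_eq_one.union hK hE₁K, ?_⟩
  rw [sum_union hE₁K.disjoint]
  omega

/-- In a finite bipartite simple graph of maximum degree at most 2 with natural-number
edge weights, in which every edge connects two vertices of the same degree, there is a
matching whose weight is at least `S1 + S2/2`, where `S1` is the total weight of the
edges joining two degree-1 vertices and `S2` is the total weight of the edges joining
two degree-2 vertices. -/
theorem matching_weight_bound {V : Type*} [Fintype V] [DecidableEq V]
    (G : SimpleGraph V) [DecidableRel G.Adj] (w : Sym2 V → ℕ)
    (hbip : G.Colorable 2)
    (hdeg : ∀ x : V, G.degree x ≤ 2)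
    (hsame : ∀ e ∈ G.edgeSet, ∀ x ∈ e, ∀ y ∈ e, G.degree x = G.degree y) :
    ∃ M : Finset (Sym2 V), M ⊆ G.edgeFinset ∧
      (∀ e ∈ M, ∀ f ∈ M, e ≠ f → ∀ x : V, ¬(x ∈ e ∧ x ∈ f)) ∧
      2 * ∑ e ∈ M, w e ≥
        2 * (∑ e ∈ G.edgeFinset.filter (fun e => ∀ x ∈ e, G.degree x = 1), w e) +
          ∑ e ∈ G.edgeFinset.filter (fun e => ∀ x ∈ e, G.degree x = 2), w e :=
  matching_weight_bound_general G w hbip hsame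
end

section
/- Let k ≥ 1 and let F be a connected simple graph on a finite vertex set with exactly 4k edges. For a pair partition of the edge set of F into 2k unordered pairs of edges, define its cost as the sum, over the pairs, of the number of vertices incident to at least one of the two edges in the pair. Then the minimum cost over all pair partitions of the edge set of F equals 6k. (In particular, the edge set of a connected simple graph with an even number of edges can be partitioned into pairs of adjacent edges, each such pair covering exactly 3 vertices.) -/
/-!
Pick for every edge one of its endpoints as its head. If every vertex is the head of an even
number of edges, the edges with a common head can be paired up, and each pair covers exactly
3 vertices; any two distinct edges cover at least 3. Such a head map exists: the number of
vertices of odd in-degree is even, because the in-degrees sum to the even number of edges, and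
reversing the edges of a path between two such vertices changes the parity of the in-degree
exactly at its two ends.
-/

open Finset

/-- The number of vertices incident to at least one edge of a block `b` of edges. -/
def edgeBlockCost {V : Type*} [Fintype V] [DecidableEq V] (b : Finset (Sym2 V)) : ℕ :=
  (univ.filter fun x : V => ∃ e ∈ b, x ∈ e).card

theorem Sym2.toFinset_injective {α : Type*} [DecidableEq α] :
    Function.Injective (Sym2.toFinset : Sym2 α → Finset α) := fun a c h =>
  Sym2.ext fun x => by rw [← mem_toFinset, h, mem_toFinset]

section EdgeBlockCost

variable {V : Type*} [Fintype V] [DecidableEq V]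

theorem edgeBlockCost_eq_card_biUnion (b : Finset (Sym2 V)) :
    edgeBlockCost b = #(b.biUnion Sym2.toFinset) := by
  rw [edgeBlockCost]
  congr 1
  ext x
  simp

theorem three_le_edgeBlockCost {b : Finset (Sym2 V)} (hb : #b = 2) (hnd : ∀ e ∈ b, ¬e.IsDiag) :
    3 ≤ edgeBlockCost b := by
  obtain ⟨a, c, hac, rfl⟩ := card_eq_two.mp hb
  rw [edgeBlockCost_eq_card_biUnion, biUnion_insert, singleton_biUnion]
  have ha := Sym2.card_toFinset_of_not_isDiag a (hnd a (by simp))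
  have hc := Sym2.card_toFinset_of_not_isDiag c (hnd c (by simp))
  by_contra! hlt
  have hA : a.toFinset ∪ c.toFinset = a.toFinset :=
    (eq_of_subset_of_card_le subset_union_left (by omega)).symm
  have hC : a.toFinset ∪ c.toFinset = c.toFinset :=
    (eq_of_subset_of_card_le subset_union_right (by omega)).symm
  exact hac (Sym2.toFinset_injective (hA.symm.trans hC))

theorem edgeBlockCost_eq_three {b : Finset (Sym2 V)} (hb : #b = 2) (hnd : ∀ e ∈ b, ¬e.IsDiag)
    {v : V} (hv : ∀ e ∈ b, v ∈ e) :
    edgeBlockCost b = 3 := by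
  refine le_antisymm ?_ (three_le_edgeBlockCost hb hnd)
  obtain ⟨a, c, -, rfl⟩ := card_eq_two.mp hb
  rw [edgeBlockCost_eq_card_biUnion, biUnion_insert, singleton_biUnion]
  have ha := Sym2.card_toFinset_of_not_isDiag a (hnd a (by simp))
  have hc := Sym2.card_toFinset_of_not_isDiag c (hnd c (by simp))
  have hvac : v ∈ a.toFinset ∩ c.toFinset := by simp [hv]
  have := card_union_add_card_inter a.toFinset c.toFinset
  have := card_pos.mpr ⟨v, hvac⟩
  omega

end EdgeBlockCost

theorem Finpartition.exists_card_two_parts_of_even_fibers {α ι : Type*} [DecidableEq α]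
    [DecidableEq ι] (f : α → ι) (s : Finset α) (hs : ∀ i, Even #{x ∈ s | f x = i}) :
    ∃ P : Finpartition s, ∀ b ∈ P.parts, #b = 2 ∧ ∃ i, ∀ x ∈ b, f x = i := by
  induction s using Finset.strongInduction with
  | H s ih =>
  rcases s.eq_empty_or_nonempty with rfl | ⟨a, ha⟩
  · exact ⟨Finpartition.empty _, by simp⟩
  have hfiber : 1 < #{x ∈ s | f x = f a} := by
    have hpos : 0 < #{x ∈ s | f x = f a} := card_pos.mpr ⟨a, mem_filter.mpr ⟨ha, rfl⟩⟩
    have := Nat.even_iff.mp (hs (f a))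
    omega
  obtain ⟨b, hb, hba⟩ := (one_lt_card_iff_nontrivial.mp hfiber).exists_ne a
  rw [mem_filter] at hb
  have hab : {a, b} ⊆ s := by simp [insert_subset_iff, ha, hb.1]
  have hrest : ∀ i, Even #{x ∈ s \ {a, b} | f x = i} := by
    intro i
    have hsplit := congrArg (fun t => #{x ∈ t | f x = i}) (sdiff_union_of_subset hab)
    simp only [filter_union] at hsplit
    rw [card_union_of_disjoint (disjoint_filter_filter sdiff_disjoint)] at hsplit
    have hpair : Even #{x ∈ ({a, b} : Finset α) | f x = i} := by
      by_cases hi : f a = i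
      · rw [filter_true_of_mem (by simp [hi, hb.2]), card_pair hba.symm]; exact even_two
      · rw [filter_false_of_mem (by simp [hi, hb.2])]; exact .zero
    have := hs i
    rw [← hsplit, Nat.even_add] at this
    exact this.mpr hpair
  obtain ⟨P, hP⟩ := ih _ (sdiff_ssubset hab (by simp)) hrest
  refine ⟨P.extend (b := {a, b}) (by simp) sdiff_disjoint (sdiff_union_of_subset hab), ?_⟩
  intro c hc
  rw [Finpartition.extend_parts, mem_insert] at hc
  rcases hc with rfl | hc
  · exact ⟨card_pair hba.symm, f a, by simp [hb.2]⟩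
  · exact hP c hc

theorem SimpleGraph.Walk.IsTrail.card_filter_mem_edgesFinset {V : Type*} [DecidableEq V]
    {G : SimpleGraph V} {u w : V} {p : G.Walk u w} (hp : p.IsTrail) (x : V) :
    #{e ∈ hp.edgesFinset | x ∈ e} = p.edges.countP (x ∈ ·) := by
  simp [Finset.filter, List.countP_eq_length_filter]

namespace EdgePairing

variable {V : Type*} [DecidableEq V]

/-- An orientation of the edges is encoded by a head map `h` with `h e ∈ e`. -/
def inDegree (E : Finset (Sym2 V)) (h : Sym2 V → V) (v : V) : ℕ := #{e ∈ E | h e = v}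

def oddVertices [Fintype V] (E : Finset (Sym2 V)) (h : Sym2 V → V) : Finset V :=
  {v | Odd (inDegree E h v)}

noncomputable def reverseOn (T : Finset (Sym2 V)) (h : Sym2 V → V) (hmem : ∀ e, h e ∈ e) :
    Sym2 V → V :=
  fun e => if e ∈ T then Sym2.Mem.other (hmem e) else h e

theorem reverseOn_mem (T : Finset (Sym2 V)) {h : Sym2 V → V} (hmem : ∀ e, h e ∈ e)
    (e : Sym2 V) :
    reverseOn T h hmem e ∈ e := by
  unfold reverseOn
  split_ifs
  exacts [Sym2.other_mem _, hmem e]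

theorem inDegree_reverseOn_add {E T : Finset (Sym2 V)} (hTE : T ⊆ E)
    (hT : ∀ e ∈ T, ¬e.IsDiag) {h : Sym2 V → V} (hmem : ∀ e, h e ∈ e) (v : V) :
    inDegree E (reverseOn T h hmem) v + 2 * #{e ∈ T | h e = v} =
      inDegree E h v + #{e ∈ T | v ∈ e} := by
  have hsub : ∀ p : Sym2 V → Prop, [DecidablePred p] →
      #{e ∈ T | p e} = #{e ∈ E | e ∈ T ∧ p e} :=
    fun p _ => by rw [← filter_filter, filter_mem_eq_inter, inter_eq_right.mpr hTE]
  simp only [inDegree, hsub, card_filter, mul_sum, ← sum_add_distrib]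
  refine sum_congr rfl fun e _ => ?_
  by_cases heT : e ∈ T
  · have hne := Sym2.other_ne (hT e heT) (hmem e)
    have hv : v ∈ e ↔ v = h e ∨ v = Sym2.Mem.other (hmem e) := by
      conv_lhs => rw [← Sym2.other_spec (hmem e)]
      exact Sym2.mem_iff
    simp only [reverseOn, heT, true_and, if_true, hv]
    split_ifs <;> grind
  · simp [reverseOn, heT]

theorem even_inDegree_reverseOn_iff {E T : Finset (Sym2 V)} (hTE : T ⊆ E)
    (hT : ∀ e ∈ T, ¬e.IsDiag) {h : Sym2 V → V} (hmem : ∀ e, h e ∈ e) (v : V) :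
    Even (inDegree E (reverseOn T h hmem) v) ↔
      (Even (inDegree E h v) ↔ Even #{e ∈ T | v ∈ e}) := by
  have := congrArg Even (inDegree_reverseOn_add hTE hT hmem v)
  simpa [Nat.even_add] using this

theorem even_card_oddVertices [Fintype V] {E : Finset (Sym2 V)} (hE : Even #E)
    (h : Sym2 V → V) : Even #(oddVertices E h) := by
  rw [oddVertices, ← even_sum_iff_even_card_odd]
  simp only [inDegree]
  rwa [← card_eq_sum_card_fiberwise fun _ _ => mem_univ _]

theorem exists_card_oddVertices_lt [Fintype V] {F : SimpleGraph V} [DecidableRel F.Adj]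
    (hconn : F.Connected) (hE : Even #F.edgeFinset) {h : Sym2 V → V} (hmem : ∀ e, h e ∈ e)
    {x : V} (hx : x ∈ oddVertices F.edgeFinset h) :
    ∃ h' : Sym2 V → V, (∀ e, h' e ∈ e) ∧
      #(oddVertices F.edgeFinset h') < #(oddVertices F.edgeFinset h) := by
  have hodd : 1 < #(oddVertices F.edgeFinset h) := by
    have hpos := card_pos.mpr ⟨x, hx⟩
    have := Nat.even_iff.mp (even_card_oddVertices hE h)
    omega
  obtain ⟨y, hy, hyx⟩ := (one_lt_card_iff_nontrivial.mp hodd).exists_ne x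
  obtain ⟨p, hp⟩ := (hconn.preconnected x y).some.toPath
  set T := hp.isTrail.edgesFinset
  have hTE : T ⊆ F.edgeFinset := fun e he => by
    simpa using p.edges_subset_edgeSet he
  have hT : ∀ e ∈ T, ¬e.IsDiag := fun e he =>
    F.not_isDiag_of_mem_edgeSet (SimpleGraph.mem_edgeFinset.mp (hTE he))
  refine ⟨reverseOn T h hmem, reverseOn_mem T hmem, ?_⟩
  have hsub : oddVertices F.edgeFinset (reverseOn T h hmem) ⊆
      (oddVertices F.edgeFinset h).erase x := by
    intro v hv
    simp only [oddVertices, mem_filter, mem_univ, true_and, mem_erase,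
      ← Nat.not_even_iff_odd] at hv hx hy ⊢
    rw [even_inDegree_reverseOn_iff hTE hT hmem, hp.isTrail.card_filter_mem_edgesFinset,
      hp.isTrail.even_countP_edges_iff] at hv
    grind
  exact (card_le_card hsub).trans_lt (card_erase_lt_of_mem hx)

theorem exists_even_inDegree [Fintype V] {F : SimpleGraph V} [DecidableRel F.Adj]
    (hconn : F.Connected) (hE : Even #F.edgeFinset) :
    ∃ h : Sym2 V → V, (∀ e, h e ∈ e) ∧ ∀ v, Even (inDegree F.edgeFinset h v) := by
  obtain ⟨h, hmem⟩ : ∃ h : Sym2 V → V, ∀ e, h e ∈ e :=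
    ⟨fun e => e.out.1, Sym2.out_fst_mem⟩
  induction hn : #(oddVertices F.edgeFinset h) using Nat.strong_induction_on generalizing h with
  | _ n ih =>
  rcases (oddVertices F.edgeFinset h).eq_empty_or_nonempty with hempty | ⟨x, hx⟩
  · refine ⟨h, hmem, fun v => Nat.not_odd_iff_even.mp fun hv => ?_⟩
    simpa [hempty] using (show v ∈ oddVertices F.edgeFinset h by simpa [oddVertices])
  · obtain ⟨h', hmem', hlt⟩ := exists_card_oddVertices_lt hconn hE hmem hx
    exact ih _ (hn ▸ hlt) h' hmem' rfl

end EdgePairing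

theorem min_edge_pairing_cost_general (k : ℕ) {V : Type*} [Fintype V]
    [DecidableEq V] (F : SimpleGraph V) [DecidableRel F.Adj]
    (hconn : F.Connected) (hcard : F.edgeFinset.card = 4 * k) :
    (∃ P : Finpartition F.edgeFinset, (∀ b ∈ P.parts, b.card = 2) ∧
      ∑ b ∈ P.parts, edgeBlockCost b = 6 * k) ∧
    (∀ P : Finpartition F.edgeFinset, (∀ b ∈ P.parts, b.card = 2) →
      6 * k ≤ ∑ b ∈ P.parts, edgeBlockCost b) := by
  have hnd : ∀ b ⊆ F.edgeFinset, ∀ e ∈ b, ¬e.IsDiag := fun b hb e he =>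
    F.not_isDiag_of_mem_edgeSet (SimpleGraph.mem_edgeFinset.mp (hb he))
  have hparts (P : Finpartition F.edgeFinset) (hP : ∀ b ∈ P.parts, #b = 2) :
      #P.parts = 2 * k := by
    have := P.sum_card_parts
    rw [sum_congr rfl hP, sum_const, smul_eq_mul, hcard] at this
    omega
  constructor
  · obtain ⟨h, hmem, heven⟩ :=
      EdgePairing.exists_even_inDegree hconn (by rw [hcard]; exact ⟨2 * k, by ring⟩)
    obtain ⟨P, hP⟩ := Finpartition.exists_card_two_parts_of_even_fibers h _ heven
    refine ⟨P, fun b hb => (hP b hb).1, ?_⟩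
    have hcost : ∀ b ∈ P.parts, edgeBlockCost b = 3 := fun b hb => by
      obtain ⟨hb2, v, hv⟩ := hP b hb
      exact edgeBlockCost_eq_three hb2 (hnd b (P.le hb)) fun e he => hv e he ▸ hmem e
    rw [sum_congr rfl hcost, sum_const, smul_eq_mul, hparts P fun b hb => (hP b hb).1]
    ring
  · intro P hP
    calc 6 * k = ∑ _b ∈ P.parts, 3 := by rw [sum_const, smul_eq_mul, hparts P hP]; ring
      _ ≤ ∑ b ∈ P.parts, edgeBlockCost b :=
        sum_le_sum fun b hb => three_le_edgeBlockCost (hP b hb) (hnd b (P.le hb))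

/-- For a connected simple graph `F` with exactly `4k` edges (`k ≥ 1`), the minimum,
over all partitions of the edge set into blocks of two edges, of the total number of
vertices covered by the blocks equals `6k`. -/
theorem min_edge_pairing_cost (k : ℕ) (hk : 1 ≤ k) {V : Type*} [Fintype V]
    [DecidableEq V] (F : SimpleGraph V) [DecidableRel F.Adj]
    (hconn : F.Connected) (hcard : F.edgeFinset.card = 4 * k) :
    (∃ P : Finpartition F.edgeFinset, (∀ b ∈ P.parts, b.card = 2) ∧
      ∑ b ∈ P.parts, edgeBlockCost b = 6 * k) ∧
    (∀ P : Finpartition F.edgeFinset, (∀ b ∈ P.parts, b.card = 2) →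
      6 * k ≤ ∑ b ∈ P.parts, edgeBlockCost b) :=
  min_edge_pairing_cost_general k F hconn hcard
end

section
/- Let G be a bipartite simple graph with exactly 4k edges, k ≥ 1. Then the following are equivalent: (i) there is a partition of the edge set of G into k blocks of 4 edges each whose total cost (the sum over blocks of the number of vertices incident to the edges of the block) is at most 4k; (ii) there is a partition of the edge set of G into k blocks, each of which forms a 4-cycle, i.e., each block equals {s(a,b), s(b,c), s(c,d), s(d,a)} for some four pairwise distinct vertices a, b, c, d. (This equivalence is the correctness of the reduction from edge partition into C4's, which establishes NP-hardness of PQ(#1=2, distinct, connected).) -/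
/-!
A 2-colouring splits the vertices covered by a block of edges into two disjoint sides `A` and `B`
such that every edge of the block joins `A` to `B`. A block of four edges thus has
`4 ≤ #A * #B`, so its cost `#A + #B` is at least 4. If `4k` edges are split into `k` blocks of
total cost at most `4k`, every block costs exactly 4, which forces `#A = #B = 2` and the block to
consist of all four edges between `A` and `B`: a 4-cycle.
-/

open Finset

section EdgeBlocks

variable {V : Type*} [DecidableEq V] {b : Finset (Sym2 V)} {A B : Finset V}

lemma subset_image_product_of_forall_mem (h : ∀ e ∈ b, ∃ x ∈ A, ∃ y ∈ B, e = s(x, y)) :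
    b ⊆ (A ×ˢ B).image fun p => s(p.1, p.2) := by
  intro e he
  obtain ⟨x, hx, y, hy, rfl⟩ := h e he
  exact mem_image_of_mem _ (mem_product.2 ⟨hx, hy⟩)

lemma image_product_pair_eq_fourCycle (a c d e : V) :
    (({a, d} ×ˢ {c, e} : Finset (V × V)).image fun p => s(p.1, p.2)) =
      {s(a, c), s(c, d), s(d, e), s(e, a)} := by
  ext f
  simp only [mem_image, mem_product, mem_insert, mem_singleton, Prod.exists]
  constructor
  · rintro ⟨x, y, ⟨rfl | rfl, rfl | rfl⟩, rfl⟩ <;> simp [Sym2.eq_swap]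
  · rintro (rfl | rfl | rfl | rfl)
    exacts [⟨a, c, by simp⟩, ⟨d, c, by simp [Sym2.eq_swap]⟩, ⟨d, e, by simp⟩,
      ⟨a, e, by simp [Sym2.eq_swap]⟩]

def IsFourCycleBlock (b : Finset (Sym2 V)) : Prop :=
  ∃ a c d e : V, a ≠ c ∧ a ≠ d ∧ a ≠ e ∧ c ≠ d ∧ c ≠ e ∧ d ≠ e ∧
    b = {s(a, c), s(c, d), s(d, e), s(e, a)}

lemma IsFourCycleBlock.card_eq_four (hb : IsFourCycleBlock b) : #b = 4 := by
  obtain ⟨a, c, d, e, hac, had, hae, hcd, hce, hde, rfl⟩ := hb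
  refine Finset.card_eq_four.2 ⟨_, _, _, _, ?_, ?_, ?_, ?_, ?_, ?_, rfl⟩ <;>
    simp <;> tauto

lemma card_le_card_mul_card (h : ∀ e ∈ b, ∃ x ∈ A, ∃ y ∈ B, e = s(x, y)) :
    #b ≤ #A * #B :=
  (card_le_card (subset_image_product_of_forall_mem h)).trans
    (card_image_le.trans (card_product A B).le)

lemma four_le_card_add_card (hb : #b = 4)
    (h : ∀ e ∈ b, ∃ x ∈ A, ∃ y ∈ B, e = s(x, y)) : 4 ≤ #A + #B := by
  have := card_le_card_mul_card h
  nlinarith [sq_nonneg ((#A : ℤ) - #B)]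

lemma isFourCycleBlock_of_card_add_card_le (hb : #b = 4) (hAB : Disjoint A B)
    (h : ∀ e ∈ b, ∃ x ∈ A, ∃ y ∈ B, e = s(x, y)) (hle : #A + #B ≤ 4) :
    IsFourCycleBlock b := by
  have hmul := card_le_card_mul_card h
  have hA : #A = 2 := by nlinarith [sq_nonneg ((#A : ℤ) - #B)]
  have hB : #B = 2 := by nlinarith [sq_nonneg ((#A : ℤ) - #B)]
  have hb_eq : b = (A ×ˢ B).image fun p => s(p.1, p.2) :=
    eq_of_subset_of_card_le (subset_image_product_of_forall_mem h)
      (card_image_le.trans (by rw [card_product, hA, hB, hb]))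
  obtain ⟨a, d, had, rfl⟩ := card_eq_two.1 hA
  obtain ⟨c, e, hce, rfl⟩ := card_eq_two.1 hB
  have hne : ∀ x ∈ ({a, d} : Finset V), ∀ y ∈ ({c, e} : Finset V), x ≠ y :=
    fun x hx y hy hxy => disjoint_left.1 hAB hx (hxy ▸ hy)
  refine ⟨a, c, d, e, hne a (by simp) c (by simp), had, hne a (by simp) e (by simp),
    (hne d (by simp) c (by simp)).symm, hce, hne d (by simp) e (by simp), ?_⟩
  rw [hb_eq, image_product_pair_eq_fourCycle]

end EdgeBlocks

section Bipartite

variable {V : Type*} [Fintype V] [DecidableEq V] {G : SimpleGraph V} [DecidableRel G.Adj]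
  {b : Finset (Sym2 V)}

def blockVertices (b : Finset (Sym2 V)) : Finset V :=
  univ.filter fun x => ∃ e ∈ b, x ∈ e

lemma edgeBlockCost_eq_card_blockVertices (b : Finset (Sym2 V)) :
    edgeBlockCost b = #(blockVertices b) := rfl

lemma IsFourCycleBlock.edgeBlockCost_le_four (hb : IsFourCycleBlock b) :
    edgeBlockCost b ≤ 4 := by
  obtain ⟨a, c, d, e, -, -, -, -, -, -, rfl⟩ := hb
  have hsub : blockVertices {s(a, c), s(c, d), s(d, e), s(e, a)} ⊆ {a, c, d, e} := by
    intro x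
    simp [blockVertices, Sym2.mem_iff]
    tauto
  rw [edgeBlockCost_eq_card_blockVertices]
  exact (card_le_card hsub).trans card_le_four

lemma exists_sides_of_coloring (C : G.Coloring (Fin 2)) (hb : b ⊆ G.edgeFinset) :
    ∃ A B : Finset V, #A + #B = edgeBlockCost b ∧ Disjoint A B ∧
      ∀ e ∈ b, ∃ x ∈ A, ∃ y ∈ B, e = s(x, y) := by
  rw [edgeBlockCost_eq_card_blockVertices]
  refine ⟨(blockVertices b).filter (C · = 0), (blockVertices b).filter (C · ≠ 0),
    card_filter_add_card_filter_not _, disjoint_filter_filter_not _ _ _, ?_⟩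
  intro e he
  induction e using Sym2.ind with
  | _ x y =>
    have hx : x ∈ blockVertices b := mem_filter.2 ⟨mem_univ x, _, he, Sym2.mem_mk_left x y⟩
    have hy : y ∈ blockVertices b := mem_filter.2 ⟨mem_univ y, _, he, Sym2.mem_mk_right x y⟩
    have hxy : C x ≠ C y := C.valid (SimpleGraph.mem_edgeFinset.1 (hb he))
    by_cases h0 : C x = 0
    · exact ⟨x, mem_filter.2 ⟨hx, h0⟩, y, mem_filter.2 ⟨hy, h0 ▸ hxy.symm⟩, rfl⟩
    · refine ⟨y, mem_filter.2 ⟨hy, ?_⟩, x, mem_filter.2 ⟨hx, h0⟩, Sym2.eq_swap⟩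
      omega

lemma four_le_edgeBlockCost (C : G.Coloring (Fin 2)) (hb : b ⊆ G.edgeFinset) (h4 : #b = 4) :
    4 ≤ edgeBlockCost b := by
  obtain ⟨A, B, hAB, -, h⟩ := exists_sides_of_coloring C hb
  exact hAB ▸ four_le_card_add_card h4 h

lemma isFourCycleBlock_of_edgeBlockCost_le (C : G.Coloring (Fin 2)) (hb : b ⊆ G.edgeFinset)
    (h4 : #b = 4) (hcost : edgeBlockCost b ≤ 4) : IsFourCycleBlock b := by
  obtain ⟨A, B, hAB, hdisj, h⟩ := exists_sides_of_coloring C hb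
  exact isFourCycleBlock_of_card_add_card_le h4 hdisj h (hAB ▸ hcost)

end Bipartite

lemma Finpartition.card_parts_mul_eq {α : Type*} [DecidableEq α] {s : Finset α}
    (P : Finpartition s) {n : ℕ} (hP : ∀ b ∈ P.parts, #b = n) : #P.parts * n = #s := by
  rw [← P.sum_card_parts, sum_const_nat hP]

theorem edge_partition_C4_iff_general (k : ℕ) {V : Type*} [Fintype V]
    [DecidableEq V] (G : SimpleGraph V) [DecidableRel G.Adj]
    (hbip : G.Colorable 2) (hcard : G.edgeFinset.card = 4 * k) :
    (∃ P : Finpartition G.edgeFinset, (∀ b ∈ P.parts, b.card = 4) ∧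
      ∑ b ∈ P.parts, edgeBlockCost b ≤ 4 * k) ↔
    (∃ P : Finpartition G.edgeFinset, ∀ b ∈ P.parts,
      ∃ a c d e : V, a ≠ c ∧ a ≠ d ∧ a ≠ e ∧ c ≠ d ∧ c ≠ e ∧ d ≠ e ∧
        b = {s(a, c), s(c, d), s(d, e), s(e, a)}) := by
  obtain ⟨C⟩ := hbip
  have hk : ∀ P : Finpartition G.edgeFinset, (∀ b ∈ P.parts, #b = 4) →
      ∑ _b ∈ P.parts, 4 = 4 * k := fun P hP => by
    rw [sum_const, smul_eq_mul, P.card_parts_mul_eq hP, hcard]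
  constructor
  · rintro ⟨P, hP, hcost⟩
    have hge : ∀ b ∈ P.parts, 4 ≤ edgeBlockCost b := fun b hb =>
      four_le_edgeBlockCost C (P.le hb) (hP b hb)
    have heq := (sum_eq_sum_iff_of_le hge).1 (le_antisymm (sum_le_sum hge) (hk P hP ▸ hcost))
    exact ⟨P, fun b hb =>
      isFourCycleBlock_of_edgeBlockCost_le C (P.le hb) (hP b hb) (heq b hb).ge⟩
  · rintro ⟨P, hP⟩
    have hP4 : ∀ b ∈ P.parts, #b = 4 := fun b hb => IsFourCycleBlock.card_eq_four (hP b hb)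
    exact ⟨P, hP4,
      hk P hP4 ▸ sum_le_sum fun b hb => IsFourCycleBlock.edgeBlockCost_le_four (hP b hb)⟩

/-- For a bipartite simple graph `G` with exactly `4k` edges (`k ≥ 1`), there is a
partition of the edge set into blocks of four edges of total cost at most `4k` if and
only if there is a partition of the edge set into blocks each of which forms a
4-cycle. -/
theorem edge_partition_C4_iff (k : ℕ) (hk : 1 ≤ k) {V : Type*} [Fintype V]
    [DecidableEq V] (G : SimpleGraph V) [DecidableRel G.Adj]
    (hbip : G.Colorable 2) (hcard : G.edgeFinset.card = 4 * k) :
    (∃ P : Finpartition G.edgeFinset, (∀ b ∈ P.parts, b.card = 4) ∧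
      ∑ b ∈ P.parts, edgeBlockCost b ≤ 4 * k) ↔
    (∃ P : Finpartition G.edgeFinset, ∀ b ∈ P.parts,
      ∃ a c d e : V, a ≠ c ∧ a ≠ d ∧ a ≠ e ∧ c ≠ d ∧ c ≠ e ∧ d ≠ e ∧
        b = {s(a, c), s(c, d), s(d, e), s(e, a)}) :=
  edge_partition_C4_iff_general k G hbip hcard
end

section
/- Consider the twelve {0,1}-vectors in Fin 12 → Fin 3 → ℕ given by v1 = v2 = v3 = (0,0,0), v4 = v5 = v6 = (1,0,0), v7 = v8 = v9 = (0,1,0), v10 = v11 = v12 = (0,0,1). Then: (a) the minimum cost over all quad partitions of Fin 12 is OPT = 3 (attained by {1,4,5,6}, {2,7,8,9}, {3,10,11,12}); (b) the block {1,2,3,4} has minimum cost (namely 1) among all 4-element subsets of Fin 12; (c) the block {7,8,11,12} has minimum cost (namely 2) among all 4-element subsets of Fin 12 \ {1,2,3,4}; and (d) the remaining block {5,6,9,10} has cost 3. Hence the greedy algorithm, which repeatedly selects a cheapest quad among the remaining vectors, can output a solution of cost 6 = 2·OPT on this instance, so its worst-case ratio for PQ is at least 2. -/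
open Finset

set_option maxRecDepth 2000

/-- The twelve vectors of the bad instance for the greedy algorithm on PQ. -/
def greedyVec : Fin 12 → Fin 3 → ℕ :=
  ![![0, 0, 0], ![0, 0, 0], ![0, 0, 0],
    ![1, 0, 0], ![1, 0, 0], ![1, 0, 0],
    ![0, 1, 0], ![0, 1, 0], ![0, 1, 0],
    ![0, 0, 1], ![0, 0, 1], ![0, 0, 1]]


section GreedyAux

lemma gbi_single_le {N n : ℕ} (v : Fin N → Fin n → ℕ) {B : Finset (Fin N)} {i : Fin N}
    (hi : i ∈ B) : (∑ j : Fin n, v i j) ≤ blockCost v B :=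
  Finset.sum_le_sum fun j _ => Finset.le_sup (f := fun i => v i j) hi

lemma gbi_pair_le {N n : ℕ} (v : Fin N → Fin n → ℕ) {B : Finset (Fin N)} {i i' : Fin N}
    (hi : i ∈ B) (hi' : i' ∈ B) : blockCost v {i, i'} ≤ blockCost v B := by
  refine Finset.sum_le_sum fun j _ => Finset.sup_mono ?_
  intro x hx
  simp only [Finset.mem_insert, Finset.mem_singleton] at hx
  rcases hx with rfl | rfl <;> assumption

lemma gbi_one_le (B : Finset (Fin 12)) (hB : B.card = 4) :
    1 ≤ blockCost greedyVec B := by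
  have hex : ∃ i ∈ B, i ∉ ({0,1,2} : Finset (Fin 12)) := by
    by_contra h
    push_neg at h
    have hsub : B ⊆ ({0,1,2} : Finset (Fin 12)) := fun x hx => by
      have := h x hx; simpa using this
    have := Finset.card_le_card hsub
    simp [hB] at this
  obtain ⟨i, hiB, hi⟩ := hex
  have h1 : ∀ i : Fin 12, i ∉ ({0,1,2} : Finset (Fin 12)) →
      1 ≤ ∑ j : Fin 3, greedyVec i j := by decide
  exact (h1 i hi).trans (gbi_single_le greedyVec hiB)

lemma gbi_two_le (B : Finset (Fin 12)) (hsub : B ⊆ univ \ ({0,1,2,3} : Finset (Fin 12)))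
    (hB : B.card = 4) : 2 ≤ blockCost greedyVec B := by
  have hne : B.Nonempty := Finset.card_pos.mp (by omega)
  obtain ⟨i, hiB⟩ := hne
  have hex : ∃ i' ∈ B, greedyVec i' ≠ greedyVec i := by
    by_contra h
    push_neg at h
    have hsub2 : B ⊆ (univ : Finset (Fin 12)).filter
        (fun x => greedyVec x = greedyVec i ∧ x ∉ ({0,1,2,3} : Finset (Fin 12))) := by
      intro x hx
      simp only [Finset.mem_filter, Finset.mem_univ, true_and]
      exact ⟨h x hx, by have := hsub hx; simpa using this⟩
    have hcard' : ∀ a : Fin 12, ((univ : Finset (Fin 12)).filter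
        (fun x => greedyVec x = greedyVec a ∧ x ∉ ({0,1,2,3} : Finset (Fin 12)))).card ≤ 3 := by
      decide
    have hcard := hcard' i
    have := Finset.card_le_card hsub2
    omega
  obtain ⟨i', hi'B, hne'⟩ := hex
  have hi : i ∉ ({0,1,2,3} : Finset (Fin 12)) := by have := hsub hiB; simpa using this
  have hi' : i' ∉ ({0,1,2,3} : Finset (Fin 12)) := by have := hsub hi'B; simpa using this
  have h2 : 2 ≤ blockCost greedyVec {i', i} := by
    have : ∀ a b : Fin 12, a ∉ ({0,1,2,3} : Finset (Fin 12)) →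
        b ∉ ({0,1,2,3} : Finset (Fin 12)) → greedyVec a ≠ greedyVec b →
        2 ≤ blockCost greedyVec {a, b} := by decide
    exact this i' i hi' hi hne'
  exact h2.trans (gbi_pair_le greedyVec hi'B hiB)

def gbi_Q : Finpartition (univ : Finset (Fin 12)) where
  parts := {({0, 3, 4, 5} : Finset (Fin 12)), {1, 6, 7, 8}, {2, 9, 10, 11}}
  supIndep := by decide
  sup_parts := by decide
  bot_notMem := by decide

end GreedyAux

/-- On the instance `greedyVec`: the optimum quad-partition cost is 3, attained by
{1,4,5,6}, {2,7,8,9}, {3,10,11,12} (0-indexed: {0,3,4,5}, {1,6,7,8}, {2,9,10,11});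
the greedy algorithm may first pick {1,2,3,4} (0-indexed {0,1,2,3}), of minimum
cost 1 among all 4-element blocks, then {7,8,11,12} (0-indexed {6,7,10,11}), of
minimum cost 2 among the remaining 4-element blocks, leaving {5,6,9,10}
(0-indexed {4,5,8,9}) of cost 3 — a greedy solution of total cost 6 = 2·OPT. -/


theorem greedy_bad_instance_PQ :
    (∃ Q : Finpartition (univ : Finset (Fin 12)), IsQuadPartition Q ∧
      Q.parts = {({0, 3, 4, 5} : Finset (Fin 12)), {1, 6, 7, 8}, {2, 9, 10, 11}} ∧
      partCost greedyVec Q = 3) ∧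
    (∀ Q : Finpartition (univ : Finset (Fin 12)),
      IsQuadPartition Q → 3 ≤ partCost greedyVec Q) ∧
    blockCost greedyVec {0, 1, 2, 3} = 1 ∧
    (∀ B : Finset (Fin 12), B.card = 4 →
      blockCost greedyVec {0, 1, 2, 3} ≤ blockCost greedyVec B) ∧
    blockCost greedyVec {6, 7, 10, 11} = 2 ∧
    (∀ B : Finset (Fin 12), B ⊆ univ \ {0, 1, 2, 3} → B.card = 4 →
      blockCost greedyVec {6, 7, 10, 11} ≤ blockCost greedyVec B) ∧
    blockCost greedyVec {4, 5, 8, 9} = 3 := by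
  refine ⟨⟨gbi_Q, ?_, rfl, ?_⟩, ?_, by decide, ?_, by decide, ?_, by decide⟩
  · intro b hb
    fin_cases hb <;> decide
  · show (∑ b ∈ ({({0, 3, 4, 5} : Finset (Fin 12)), {1, 6, 7, 8}, {2, 9, 10, 11}} :
      Finset (Finset (Fin 12))), blockCost greedyVec b) = 3
    rw [Finset.sum_insert (by decide), Finset.sum_insert (by decide), Finset.sum_singleton]
    have h1 : blockCost greedyVec {0, 3, 4, 5} = 1 := by decide
    have h2 : blockCost greedyVec {1, 6, 7, 8} = 1 := by decide
    have h3 : blockCost greedyVec {2, 9, 10, 11} = 1 := by decide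
    rw [h1, h2, h3]
    rfl
  · intro Q hQ
    have hsum : ∑ b ∈ Q.parts, b.card = 12 := by
      simpa using Q.sum_card_parts
    have hsum4 : ∑ b ∈ Q.parts, b.card = 4 * Q.parts.card := by
      rw [Finset.sum_congr rfl hQ]
      simp [mul_comm]
    have hcard : Q.parts.card = 3 := by omega
    calc 3 = ∑ _b ∈ Q.parts, 1 := by simp [hcard]
    _ ≤ ∑ b ∈ Q.parts, blockCost greedyVec b :=
        Finset.sum_le_sum fun b hb => gbi_one_le b (hQ b hb)
    _ = partCost greedyVec Q := rfl
  · exact fun B hB => by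
      have := gbi_one_le B hB
      have h1 : blockCost greedyVec {0,1,2,3} = 1 := by decide
      omega
  · exact fun B hsub hB => by
      have := gbi_two_le B hsub hB
      have h2 : blockCost greedyVec {6,7,10,11} = 2 := by decide
      omega
end

section
/- Let s ≥ 1 and k ≥ 1 be natural numbers and let v : Fin (2^s · k) → Fin n → ℕ be any family of vectors. Then for every partition P of Fin (2^s · k) into blocks of size 2^s, the total cost of P multiplied by 2^{s-1} is at least the minimum cost over all pair partitions of Fin (2^s · k): 2^{s-1} · cost(P) ≥ min over pair partitions M of cost(M). (Consequently, forming groups of size 2^s by s rounds of minimum-cost matching has worst-case ratio at most 2^{s-1}.) -/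
open Finset

/-- Every finset of even cardinality has a partition into pairs. -/
lemma exists_pair_part {α : Type*} [DecidableEq α] (m : ℕ) :
    ∀ b : Finset α, b.card = 2 * m → ∃ Q : Finpartition b, ∀ c ∈ Q.parts, c.card = 2 := by
  induction m with
  | zero =>
    intro b hb
    rw [Finset.card_eq_zero] at hb
    subst hb
    exact ⟨Finpartition.empty _, by simp [Finpartition.empty]⟩
  | succ m ih =>
    intro b hb
    have h2 : 2 ≤ b.card := by omega
    obtain ⟨x, hx⟩ : b.Nonempty := Finset.card_pos.1 (by omega)
    obtain ⟨y, hy, hxy⟩ : ∃ y ∈ b, y ≠ x := by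
      apply Finset.exists_mem_ne (by omega)
    set p : Finset α := {x, y} with hp
    have hpcard : p.card = 2 := Finset.card_pair (Ne.symm hxy)
    have hpsub : p ⊆ b := by
      intro z hz
      rcases Finset.mem_insert.1 hz with rfl | hz
      · exact hx
      · rw [Finset.mem_singleton.1 hz]; exact hy
    have hcard' : (b \ p).card = 2 * m := by
      rw [Finset.card_sdiff_of_subset hpsub, hb, hpcard]; omega
    obtain ⟨Q', hQ'⟩ := ih (b \ p) hcard'
    have hpne : p ≠ (⊥ : Finset α) := by
      intro h
      have : x ∈ p := Finset.mem_insert_self x _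
      simp [h] at this
    have hdisj : Disjoint (b \ p) p := Finset.sdiff_disjoint
    have hsup : (b \ p) ⊔ p = b := by
      rw [sup_eq_union, Finset.sdiff_union_of_subset hpsub]
    refine ⟨Q'.extend hpne hdisj hsup, ?_⟩
    intro c hc
    rw [Finpartition.extend_parts, Finset.mem_insert] at hc
    rcases hc with rfl | hc
    · exact hpcard
    · exact hQ' c hc

/-- For every partition `P` of `Fin (2^s * k)` into blocks of size `2^s`, the cost of
`P` multiplied by `2^(s-1)` is at least the minimum cost over all pair partitions.
Consequently, forming groups of size `2^s` by `s` rounds of minimum-cost matching has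
worst-case ratio at most `2^(s-1)`. -/
theorem rounds_cost_bound (s k n : ℕ) (hs : 1 ≤ s) (hk : 1 ≤ k)
    (v : Fin (2 ^ s * k) → Fin n → ℕ)
    (P : Finpartition (univ : Finset (Fin (2 ^ s * k))))
    (hP : ∀ b ∈ P.parts, b.card = 2 ^ s)
    (M : Finpartition (univ : Finset (Fin (2 ^ s * k))))
    (hM : IsPairPartition M)
    (hMmin : ∀ M' : Finpartition (univ : Finset (Fin (2 ^ s * k))),
      IsPairPartition M' → partCost v M ≤ partCost v M') :
    partCost v M ≤ 2 ^ (s - 1) * partCost v P := by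
  classical
  -- for each part b of P, choose a pair partition of b
  have hchoice : ∀ b ∈ P.parts, ∃ Q : Finpartition b, ∀ c ∈ Q.parts, c.card = 2 := by
    intro b hb
    apply exists_pair_part (2 ^ (s - 1)) b
    rw [hP b hb]
    have : 2 * 2 ^ (s - 1) = 2 ^ s := by
      rw [← pow_succ']
      congr 1
      omega
    omega
  choose Q hQ using hchoice
  set M' : Finpartition (univ : Finset (Fin (2 ^ s * k))) := P.bind Q with hM'
  have hM'pair : IsPairPartition M' := by
    intro c hc
    rw [hM', Finpartition.mem_bind] at hc
    obtain ⟨A, hA, hc⟩ := hc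
    exact hQ A hA c hc
  refine (hMmin M' hM'pair).trans ?_
  -- cost of M' = sum over parts b of P of sums over pairs
  have hsum : partCost v M' = ∑ b ∈ P.parts.attach, ∑ c ∈ (Q b.1 b.2).parts, blockCost v c := by
    rw [partCost, hM', Finpartition.bind_parts]
    apply Finset.sum_biUnion
    intro a ha b hb hab
    simp only [Finset.disjoint_left]
    intro c hca hcb
    have hc1 : c ⊆ a.1 := (Q a.1 a.2).le hca
    have hc2 : c ⊆ b.1 := (Q b.1 b.2).le hcb
    have hcne : c.Nonempty := (Q a.1 a.2).nonempty_of_mem_parts hca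
    have hab' : a.1 ≠ b.1 := fun h => hab (Subtype.ext h)
    have := P.disjoint a.2 b.2 hab'
    obtain ⟨x, hx⟩ := hcne
    exact (Finset.disjoint_left.1 this (hc1 hx)) (hc2 hx)
  rw [hsum, partCost, Finset.mul_sum, ← Finset.sum_attach P.parts (fun b => 2 ^ (s-1) * blockCost v b)]
  apply Finset.sum_le_sum
  intro b _
  -- each pair cost ≤ block cost, and there are 2^(s-1) pairs
  have hle : ∀ c ∈ (Q b.1 b.2).parts, blockCost v c ≤ blockCost v b.1 := by
    intro c hc
    apply Finset.sum_le_sum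
    intro j _
    exact Finset.sup_mono ((Q b.1 b.2).le hc)
  calc ∑ c ∈ (Q b.1 b.2).parts, blockCost v c
      ≤ ∑ _c ∈ (Q b.1 b.2).parts, blockCost v b.1 := Finset.sum_le_sum hle
    _ = (Q b.1 b.2).parts.card * blockCost v b.1 := by rw [Finset.sum_const, smul_eq_mul]
    _ ≤ 2 ^ (s - 1) * blockCost v b.1 := by
        apply Nat.mul_le_mul_right
        -- card of pair partition of a set of size 2^s is 2^(s-1)
        have hsum2 : ∑ c ∈ (Q b.1 b.2).parts, c.card = 2 ^ s := by
          rw [(Q b.1 b.2).sum_card_parts, hP b.1 b.2]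
        have : ∑ c ∈ (Q b.1 b.2).parts, c.card = 2 * (Q b.1 b.2).parts.card := by
          rw [Finset.sum_congr rfl (hQ b.1 b.2), Finset.sum_const, smul_eq_mul, Nat.mul_comm]
        have h2s : 2 * 2 ^ (s - 1) = 2 ^ s := by
          rw [← pow_succ']; congr 1; omega
        omega
end
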